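/- arXiv:2604.26901 — 10 statements merged into one kernel-verified Lean document; each statement's English description precedes it below -/
import Mathlib

section
/- Let H be a monoid, A a subset of H containing the identity 1_H, and n an integer greater than 2. Then the equation XA = A^n has at least 2^(|A|-1) solutions X among subsets of H containing 1_H. (If A is infinite, interpret this as: there are infinitely many such solutions.) -/
/-!
Every `S` with `1 ∈ S ⊆ A` gives the solution `X = S ∪ (A ^ (n - 1) \ A)`: an element
`p * a` of `A ^ (n - 1) * A` with `p ∈ A` is either in `A`, hence equal to `1 * (p * a)`, or in
`A ^ (n - 1) \ A` (as `A * A ⊆ A ^ (n - 1)` for `n ≥ 3`), hence equal to `(p * a) * 1`. Intersecting with `A`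
recovers `S`, so distinct `S` give distinct solutions, and there are `2 ^ (|A| - 1)` such `S`.
-/

open Pointwise

namespace Set

variable {α M : Type*}

theorem encard_powerset {s : Set α} (hs : s.Finite) : (𝒫 s).encard = 2 ^ s.ncard := by
  rw [← hs.powerset.cast_ncard_eq, ncard_powerset s hs]
  push_cast
  rfl

theorem Infinite.powerset {s : Set α} (hs : s.Infinite) : (𝒫 s).Infinite :=
  infinite_of_injOn_mapsTo singleton_injective.injOn
    (fun _ hx => singleton_subset_iff.mpr hx) hs

theorem injOn_insert_union_of_disjoint {a : α} {A D : Set α} (hD : Disjoint D A) :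
    InjOn (fun T => insert a T ∪ D) (𝒫 (A \ {a})) := by
  have hrecover : ∀ T ∈ 𝒫 (A \ {a}), (insert a T ∪ D) ∩ (A \ {a}) = T := by
    intro T hT
    rw [union_inter_distrib_right, (hD.mono_right sdiff_subset).inter_eq, union_empty,
      insert_inter_of_notMem (fun h => h.2 rfl), inter_eq_left.mpr hT]
  intro T hT T' hT' h
  rw [← hrecover T hT, ← hrecover T' hT']
  exact congrArg (· ∩ (A \ {a})) h

theorem union_sdiff_mul_eq_pow_succ [Monoid M] {A S : Set M} (hA : (1 : M) ∈ A)
    (hS : (1 : M) ∈ S) (hSA : S ⊆ A) {m : ℕ} (hm : 2 ≤ m) :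
    (S ∪ (A ^ m \ A)) * A = A ^ (m + 1) := by
  have hsq : A * A ⊆ A ^ m := by
    rw [← sq]; exact pow_subset_pow_right hA hm
  rw [pow_succ]
  apply Subset.antisymm
  · rw [union_mul]
    exact union_subset ((mul_subset_mul_right hSA).trans (hsq.trans (subset_mul_left _ hA)))
      (mul_subset_mul_right sdiff_subset)
  · rintro _ ⟨p, hp, a, ha, rfl⟩
    by_cases hpA : p ∈ A
    · by_cases hpa : p * a ∈ A
      · exact ⟨1, Or.inl hS, p * a, hpa, one_mul _⟩
      · exact ⟨p * a, Or.inr ⟨hsq (mul_mem_mul hpA ha), hpa⟩, 1, hA, mul_one _⟩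
    · exact ⟨p, Or.inr ⟨hp, hpA⟩, a, ha, rfl⟩

end Set

open Set in
/-- If `1 ∈ A` and `n > 2`, the equation `X * A = A ^ n` has at least
`2 ^ (|A| - 1)` solutions `X` among subsets of `H` containing `1` (infinitely many
solutions if `A` is infinite). -/
theorem stmt1 {H : Type*} [Monoid H] (A : Set H) (hA : (1 : H) ∈ A) (n : ℕ) (hn : 2 < n) :
    (A.Finite → (2 ^ (A.ncard - 1) : ℕ∞) ≤ {X : Set H | (1 : H) ∈ X ∧ X * A = A ^ n}.encard) ∧
    (A.Infinite → {X : Set H | (1 : H) ∈ X ∧ X * A = A ^ n}.Infinite) := by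
  obtain ⟨m, rfl⟩ : ∃ m, n = m + 1 := ⟨n - 1, by omega⟩
  have hinj := injOn_insert_union_of_disjoint (a := (1 : H)) (disjoint_sdiff_left (t := A ^ m) (s := A))
  have hmaps : MapsTo (fun T => insert 1 T ∪ (A ^ m \ A)) (𝒫 (A \ {1}))
      {X : Set H | (1 : H) ∈ X ∧ X * A = A ^ (m + 1)} := fun T hT =>
    ⟨Or.inl (mem_insert 1 T),
      union_sdiff_mul_eq_pow_succ hA (mem_insert 1 T)
        (insert_subset hA (hT.trans sdiff_subset)) (by omega)⟩
  refine ⟨fun hfin => ?_, fun hinf => ?_⟩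
  · calc (2 ^ (A.ncard - 1) : ℕ∞) = (𝒫 (A \ {1})).encard := by
          rw [encard_powerset (hfin.sdiff), ncard_sdiff_singleton_of_mem hA]
      _ ≤ _ := encard_le_encard_of_injOn hmaps hinj
  · exact infinite_of_injOn_mapsTo hinj hmaps (hinf.sdiff (finite_singleton 1)).powerset
end

section
/- Let H be a monoid, A a subset of H containing the identity, n an integer with n ≥ 3, and B any subset of A \ {1_H}. Then (A^(n-1) \ B) · A = A^n. -/
open Pointwise

/-- For a monoid `H`, `1 ∈ A ⊆ H`, `n ≥ 3` and `B ⊆ A \ {1}`,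
one has `(A^(n-1) \ B) * A = A^n`. -/
theorem stmt2 {H : Type*} [Monoid H] (A B : Set H) (hA : (1 : H) ∈ A) (n : ℕ) (hn : 3 ≤ n)
    (hB : B ⊆ A \ {1}) :
    (A ^ (n - 1) \ B) * A = A ^ n := by
  obtain ⟨m, rfl⟩ : ∃ m, n = m + 1 := ⟨n - 1, by omega⟩
  have hm : 2 ≤ m := by omega
  simp only [Nat.add_sub_cancel]
  have h1m : (1 : H) ∈ A ^ m := by simpa using Set.pow_mem_pow hA (n := m)
  have h1B : (1 : H) ∉ B := fun h => (hB h).2 rfl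
  rw [pow_succ]
  apply Set.Subset.antisymm
  · exact Set.mul_subset_mul_right Set.diff_subset
  · rintro x hx
    obtain ⟨y, hy, a, ha, rfl⟩ := hx
    by_cases hyB : y ∈ B
    · have hyA : y ∈ A := (hB hyB).1
      by_cases hxB : y * a ∈ B
      · exact ⟨1, ⟨h1m, h1B⟩, y * a, (hB hxB).1, one_mul _⟩
      · have : y * a ∈ A ^ m := by
          have h2 : y * a ∈ A ^ 2 := by
            rw [sq]; exact Set.mul_mem_mul hyA ha
          exact Set.pow_subset_pow_right hA hm h2
        exact ⟨y * a, ⟨this, hxB⟩, 1, hA, mul_one _⟩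
    · exact ⟨y, ⟨hy, hyB⟩, a, ha, rfl⟩
end

section
/- Let A be a non-empty subset of a cancellative commutative semigroup H and let n be an integer greater than 1. Then the equation A^(2n) = A^n · X has at least |A| solutions X among the non-empty subsets of H. (If A is infinite, interpret this as: there are infinitely many such solutions.) -/
open Pointwise

/-- `setPow A n` is the setwise power `A^n` of a subset `A` of a semigroup, for `n ≥ 1`
(with the junk convention `setPow A 0 = A`). -/
def setPow {H : Type*} [Mul H] (A : Set H) : ℕ → Set H
  | 0 => A
  | 1 => A
  | n + 2 => setPow A (n + 1) * A

private def spow {H : Type*} [Mul H] (a : H) : ℕ → H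
  | 0 => a
  | k + 1 => spow a k * a

private def gpow {H : Type*} [Mul H] (a b : H) : ℕ → H
  | 0 => b * b
  | k + 1 => gpow a b k * a

private theorem setPow_add {H : Type*} [CommSemigroup H] (A : Set H) :
    ∀ p q : ℕ, setPow A (p + 1 + (q + 1)) = setPow A (p + 1) * setPow A (q + 1) := by
  intro p q
  induction q with
  | zero => rfl
  | succ q ih =>
      have he : p + 1 + (q + 1 + 1) = p + q + 2 + 1 := by omega
      rw [he]
      have h1 : setPow A (p + q + 2 + 1) = setPow A (p + q + 2) * A := rfl
      have h2 : setPow A (p + q + 2) = setPow A (p + 1) * setPow A (q + 1) := by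
        have : p + q + 2 = p + 1 + (q + 1) := by omega
        rw [this, ih]
      rw [h1, h2, mul_assoc]
      rfl

private theorem spow_mem {H : Type*} [Mul H] {A : Set H} {a : H} (ha : a ∈ A) :
    ∀ k, spow a k ∈ setPow A (k + 1) := by
  intro k
  induction k with
  | zero => exact ha
  | succ k ih => exact Set.mul_mem_mul ih ha

private theorem gpow_mem {H : Type*} [Mul H] {A : Set H} {a b : H} (ha : a ∈ A) (hb : b ∈ A) :
    ∀ k, gpow a b k ∈ setPow A (k + 2) := by
  intro k
  induction k with
  | zero => exact Set.mul_mem_mul hb hb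
  | succ k ih => exact Set.mul_mem_mul ih ha

private theorem gpow_mul_a {H : Type*} [CommSemigroup H] (a b : H) :
    ∀ k, gpow a b k * a = (spow a k * b) * b := by
  intro k
  induction k with
  | zero => show (b * b) * a = (a * b) * b; ac_rfl
  | succ k ih =>
      show (gpow a b k * a) * a = ((spow a k * a) * b) * b
      rw [ih]; ac_rfl

private theorem vb_sq {H : Type*} [CommSemigroup H] (a b : H) :
    ∀ k, (spow a k * b) * (spow a k * b) = spow a (k + 1) * gpow a b k := by
  intro k
  induction k with
  | zero => show (a * b) * (a * b) = (a * a) * (b * b); ac_rfl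
  | succ k ih =>
      show ((spow a k * a) * b) * ((spow a k * a) * b) = ((spow a k * a) * a) * (gpow a b k * a)
      have : ((spow a k * a) * b) * ((spow a k * a) * b)
          = ((spow a k * b) * (spow a k * b)) * (a * a) := by ac_rfl
      rw [this, ih]
      show (spow a k * a) * gpow a b k * (a * a) = _
      ac_rfl

/-- For a nonempty subset `A` of a cancellative commutative semigroup and
`n > 1`, the equation `A^(2n) = A^n * X` has at least `|A|` solutions `X` among nonempty
subsets (infinitely many if `A` is infinite); expressed via extended cardinalities. -/
theorem stmt4 {H : Type*} [CommSemigroup H] [IsCancelMul H] (A : Set H) (hA : A.Nonempty)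
    (n : ℕ) (hn : 1 < n) :
    A.encard ≤ {X : Set H | X.Nonempty ∧ setPow A (2 * n) = setPow A n * X}.encard := by
  obtain ⟨a, ha⟩ := hA
  obtain ⟨m, rfl⟩ : ∃ m, n = m + 2 := ⟨n - 2, by omega⟩
  clear hn
  have h2 : setPow A (2 * (m + 2)) = setPow A (m + 2) * setPow A (m + 2) := by
    have h := setPow_add A (m + 1) (m + 1)
    have he : m + 1 + 1 + (m + 1 + 1) = 2 * (m + 2) := by omega
    rw [he] at h
    exact h
  -- the maximal solution
  set M : Set H := {t | ∀ u ∈ setPow A (m + 2), u * t ∈ setPow A (2 * (m + 2))} with hM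
  have hsub : setPow A (m + 2) ⊆ M := by
    intro x hx u hu
    rw [h2]
    exact Set.mul_mem_mul hu hx
  -- v b = a^(m+1) * b
  set v : H → H := fun b => spow a m * b with hvdef
  have hv : ∀ b ∈ A, v b ∈ setPow A (m + 2) := fun b hb =>
    Set.mul_mem_mul (spow_mem ha m) hb
  have hvinj : ∀ b c : H, v b = v c → b = c := fun b c h => mul_left_cancel h
  set F : H → Set H := fun b => M \ ({v b} \ {v a}) with hFdef
  have hmemF : ∀ b x : H, x ∈ F b ↔ x ∈ M ∧ ¬(x = v b ∧ x ≠ v a) := by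
    intro b x
    simp [hFdef, Set.mem_diff]
  -- each F b is a solution
  have hFsol : ∀ b ∈ A, (F b).Nonempty ∧
      setPow A (2 * (m + 2)) = setPow A (m + 2) * F b := by
    intro b hb
    constructor
    · exact ⟨v a, (hmemF b (v a)).2 ⟨hsub (hv a ha), fun h => h.2 rfl⟩⟩
    · apply Set.Subset.antisymm
      · -- coverage
        intro z hz
        rw [h2, Set.mem_mul] at hz
        obtain ⟨u, hu, x, hx, rfl⟩ := hz
        by_cases hxb : x = v b ∧ x ≠ v a
        · by_cases hub : u = v b ∧ u ≠ v a
          · -- z = v b * v b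
            have hba : b ≠ a := fun h => hxb.2 (by rw [hxb.1, h])
            have key : u * x = spow a (m + 1) * gpow a b m := by
              rw [hub.1, hxb.1, hvdef]
              exact vb_sq a b m
            rw [key]
            refine Set.mul_mem_mul (spow_mem ha (m + 1)) ((hmemF b _).2 ⟨hsub (gpow_mem ha hb m), ?_⟩)
            rintro ⟨hg, -⟩
            apply hba
            have h1 : gpow a b m * a = v b * b := gpow_mul_a a b m
            rw [hg] at h1
            exact (mul_left_cancel h1).symm
          · rw [mul_comm u x]
            exact Set.mul_mem_mul hx ((hmemF b u).2 ⟨hsub hu, hub⟩)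
        · exact Set.mul_mem_mul hu ((hmemF b x).2 ⟨hsub hx, hxb⟩)
      · intro z hz
        rw [Set.mem_mul] at hz
        obtain ⟨u, hu, x, hx, rfl⟩ := hz
        exact hx.1 u hu
  -- injectivity
  have hkey : ∀ b ∈ A, ∀ c ∈ A, F b = F c → b ≠ a → b = c := by
    intro b hb c hc hbc hba
    have hvb : v b ∉ F b := by
      rw [hmemF]
      rintro ⟨-, h⟩
      exact h ⟨rfl, fun h' => hba (hvinj b a h')⟩
    rw [hbc] at hvb
    rw [hmemF] at hvb
    push_neg at hvb
    obtain ⟨h1, -⟩ := hvb (hsub (hv b hb))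
    exact hvinj b c h1
  have hinj : Set.InjOn F A := by
    intro b hb c hc hbc
    by_cases hba : b = a
    · by_cases hca : c = a
      · rw [hba, hca]
      · exact (hkey c hc b hb hbc.symm hca).symm
    · exact hkey b hb c hc hbc hba
  calc A.encard = (F '' A).encard := (hinj.encard_image).symm
    _ ≤ _ := by
        apply Set.encard_le_encard
        rintro X ⟨b, hb, rfl⟩
        exact hFsol b hb
end

section
/- Let H be a cancellative commutative semigroup, A a subset of H with |A| ≥ 2, n ≥ 2 an integer, x = x_1⋯x_{n-1} a product of n-1 elements of A, and a an element of A with a ≠ x_1. Then the proper subset X_a := A^n \ {ax} of A^n satisfies A^n · X_a = A^(2n). -/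
open Pointwise

lemma setPow_succ {H : Type*} [Semigroup H] (A : Set H) (n : ℕ) (hn : 1 ≤ n) :
    setPow A (n + 1) = setPow A n * A := by
  match n, hn with
  | (k+1), _ => rfl

lemma setPow_add_s5 {H : Type*} [Semigroup H] (A : Set H) (m k : ℕ) (hm : 1 ≤ m)
    (hk : 1 ≤ k) : setPow A m * setPow A k = setPow A (m + k) := by
  induction k with
  | zero => omega
  | succ k ih =>
    rcases Nat.eq_or_lt_of_le hk with h | h
    · simp only [← h]
      exact (setPow_succ A m hm).symm
    · have hk1 : 1 ≤ k := by omega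
      rw [setPow_succ A k hk1, ← mul_assoc, ih hk1,
        ← setPow_succ A (m + k) (by omega), add_assoc]

lemma mem_mul_setPow {H : Type*} [CommSemigroup H] {A : Set H} {a z : H}
    (ha : a ∈ A) (k : ℕ) (hk : 1 ≤ k) (hz : z ∈ setPow A k) :
    a * z ∈ setPow A (k + 1) := by
  rw [setPow_succ A k hk, mul_comm a z]
  exact Set.mul_mem_mul hz ha

/-- In a cancellative commutative semigroup, if `|A| ≥ 2`, `n ≥ 2`,
`x = x₁ ⋯ x_{n-1}` is a product of `n-1` elements of `A` (with first factor `x₁`), and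
`a ∈ A` with `a ≠ x₁`, then `X_a := A^n \ {a*x}` is a proper subset of `A^n` with
`A^n * X_a = A^(2n)`. -/
theorem stmt5 {H : Type*} [CommSemigroup H] [IsCancelMul H] (A : Set H)
    (hA : 2 ≤ A.encard) (n : ℕ) (hn : 2 ≤ n) (x x₁ : H) (hx₁ : x₁ ∈ A)
    (hx : (n = 2 ∧ x = x₁) ∨ (3 ≤ n ∧ ∃ y ∈ setPow A (n - 2), x = x₁ * y))
    (a : H) (ha : a ∈ A) (hax : a ≠ x₁) :
    (setPow A n \ {a * x}) ⊂ setPow A n ∧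
      setPow A n * (setPow A n \ {a * x}) = setPow A (2 * n) := by
  -- x ∈ A^(n-1)
  have hxmem : x ∈ setPow A (n - 1) := by
    rcases hx with ⟨hn2, hxe⟩ | ⟨hn3, y, hy, hxe⟩
    · subst hxe hn2; exact hx₁
    · subst hxe
      have h1 : n - 1 = (n - 2) + 1 := by omega
      rw [h1]
      exact mem_mul_setPow hx₁ (n - 2) (by omega) hy
  have haxmem : a * x ∈ setPow A n := by
    have h1 : n = (n - 1) + 1 := by omega
    rw [h1]
    exact mem_mul_setPow ha (n - 1) (by omega) hxmem
  -- the key splitting of (a*x)*(a*x)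
  have key : ∃ u' v', u' ∈ setPow A n ∧ v' ∈ setPow A n ∧ v' ≠ a * x ∧
      u' * v' = (a * x) * (a * x) := by
    rcases hx with ⟨hn2, hxe⟩ | ⟨hn3, y, hy, hxe⟩
    · subst hxe hn2
      refine ⟨a * a, x * x, Set.mul_mem_mul ha ha, Set.mul_mem_mul hx₁ hx₁, ?_,
        mul_mul_mul_comm a a x x⟩
      intro h
      exact hax (mul_right_cancel h).symm
    · subst hxe
      have hay : a * y ∈ setPow A (n - 1) := by
        have h1 : n - 1 = (n - 2) + 1 := by omega
        rw [h1]
        exact mem_mul_setPow ha (n - 2) (by omega) hy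
      have haay : a * (a * y) ∈ setPow A n := by
        have h1 : n = (n - 1) + 1 := by omega
        rw [h1]
        exact mem_mul_setPow ha (n - 1) (by omega) hay
      have hxxy : x₁ * (x₁ * y) ∈ setPow A n := by
        have h1 : n = (n - 1) + 1 := by omega
        rw [h1]
        exact mem_mul_setPow hx₁ (n - 1) (by omega)
          (by
            have h2 : n - 1 = (n - 2) + 1 := by omega
            rw [h2]
            exact mem_mul_setPow hx₁ (n - 2) (by omega) hy)
      refine ⟨a * (a * y), x₁ * (x₁ * y), haay, hxxy, ?_, by ac_rfl⟩
      intro h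
      exact hax (mul_right_cancel h).symm
  constructor
  · exact Set.sdiff_singleton_ssubset.mpr haxmem
  · apply le_antisymm
    · calc setPow A n * (setPow A n \ {a * x}) ⊆ setPow A n * setPow A n :=
            Set.mul_subset_mul_left Set.diff_subset
        _ = setPow A (2 * n) := by rw [setPow_add_s5 A n n (by omega) (by omega), two_mul]
    · intro z hz
      rw [two_mul, ← setPow_add_s5 A n n (by omega) (by omega)] at hz
      obtain ⟨u, hu, v, hv, rfl⟩ := hz
      by_cases hv' : v = a * x
      · by_cases hu' : u = a * x
        · subst hu' hv'
          obtain ⟨u', v', hu'', hv'', hne, heq⟩ := key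
          exact ⟨u', hu'', v', ⟨hv'', hne⟩, heq⟩
        · exact ⟨v, hv, u, ⟨hu, hu'⟩, mul_comm v u⟩
      · exact ⟨u, hu, v, ⟨hv, hv'⟩, rfl⟩
end

section
/- If H and K are cancellative commutative semigroups, then every isomorphism f from P(H) to P(K) maps the finite non-empty subsets of H bijectively onto the finite non-empty subsets of K; that is, f restricts to an isomorphism from P_fin(H) to P_fin(K). -/
open Pointwise

/-- The large power semigroup: nonempty subsets of a semigroup `H` under setwise
multiplication. -/
def PowSg (H : Type*) [Semigroup H] : Type _ := {X : Set H // X.Nonempty}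

noncomputable instance {H : Type*} [Semigroup H] : Mul (PowSg H) :=
  ⟨fun X Y => ⟨X.1 * Y.1, X.2.mul Y.2⟩⟩

/-- The set of solutions `Y` of `X * Y = X * (X * X)`. -/
def sols {H : Type*} [Semigroup H] (X : PowSg H) : Set (PowSg H) :=
  {Y | X * Y = X * (X * X)}

section Aux

variable {H : Type*} [CommSemigroup H] [IsCancelMul H]

/-- Removing one product `a*b` (with `a ≠ b` in `X`) from `X*X` does not change `X*(X*X)`. -/
lemma aux_removal {X : Set H} {a b : H} (ha : a ∈ X) (hb : b ∈ X) (hab : a ≠ b) :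
    X * ((X * X) \ {a * b}) = X * (X * X) := by
  apply Set.Subset.antisymm
  · exact Set.mul_subset_mul_left Set.diff_subset
  · rintro t ⟨x, hx, p, hp, rfl⟩
    rcases hp with ⟨y, hy, z, hz, rfl⟩
    show x * (y * z) ∈ X * ((X * X) \ {a * b})
    by_cases hyz : y * z = a * b
    · rw [hyz]
      by_cases hxa : x = a
      · refine ⟨b, hb, a * a, ⟨Set.mul_mem_mul ha ha, ?_⟩, ?_⟩
        · simp only [Set.mem_singleton_iff]
          intro h
          exact hab (mul_left_cancel h)
        · show b * (a * a) = x * (a * b)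
          rw [hxa, mul_comm b (a * a), mul_assoc, mul_comm a b]
      · refine ⟨a, ha, x * b, ⟨Set.mul_mem_mul hx hb, ?_⟩, ?_⟩
        · simp only [Set.mem_singleton_iff]
          intro h
          exact hxa (mul_right_cancel h)
        · show a * (x * b) = x * (a * b)
          rw [mul_comm a (x * b), mul_assoc, mul_comm b a]
    · exact ⟨x, hx, y * z, ⟨Set.mul_mem_mul hy hz, hyz⟩, rfl⟩

/-- Finiteness of `X` is equivalent to finiteness of the solution set. -/
lemma finite_iff_sols_finite (X : PowSg H) : X.1.Finite ↔ (sols X).Finite := by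
  constructor
  · intro hX
    obtain ⟨x₀, hx₀⟩ := X.2
    have hM : (X.1 * (X.1 * X.1)).Finite := hX.mul (hX.mul hX)
    have hT : ((fun h => x₀ * h) ⁻¹' (X.1 * (X.1 * X.1))).Finite :=
      hM.preimage ((mul_right_injective x₀).injOn)
    have key : ∀ Y ∈ sols X, Y.1 ⊆ (fun h => x₀ * h) ⁻¹' (X.1 * (X.1 * X.1)) := by
      intro Y hY y hy
      have h1 : x₀ * y ∈ (X * Y).1 := Set.mul_mem_mul hx₀ hy
      rw [hY] at h1
      exact h1
    apply Set.Finite.of_finite_image ?_ Subtype.val_injective.injOn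
    apply hT.finite_subsets.subset
    rintro S ⟨Y, hY, rfl⟩
    exact key Y hY
  · intro hsols
    by_contra hX
    have hX' : X.1.Infinite := hX
    obtain ⟨a₀, ha₀⟩ := X.2
    have hinf : (X.1 \ {a₀}).Infinite := hX'.diff (Set.finite_singleton a₀)
    haveI := hinf.to_subtype
    have hne : ∀ b : ↥(X.1 \ {a₀}), a₀ ≠ b.1 := fun b h => b.2.2 h.symm
    set g : ↥(X.1 \ {a₀}) → PowSg H := fun b =>
      ⟨(X.1 * X.1) \ {a₀ * b.1},
        ⟨a₀ * a₀, Set.mul_mem_mul ha₀ ha₀, by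
          simp only [Set.mem_singleton_iff]
          intro h
          exact hne b (mul_left_cancel h)⟩⟩ with hg
    have hmem : ∀ b, g b ∈ sols X := by
      intro b
      exact Subtype.ext (aux_removal ha₀ b.2.1 (hne b))
    have hginj : Function.Injective g := by
      intro b b' h
      have hval := congrArg Subtype.val h
      simp only [hg] at hval
      have h1 : a₀ * b.1 ∉ (X.1 * X.1) \ {a₀ * b.1} := by simp
      rw [hval] at h1
      have h2 : a₀ * b.1 ∈ X.1 * X.1 := Set.mul_mem_mul ha₀ b.2.1
      have h3 : a₀ * b.1 ∈ ({a₀ * b'.1} : Set H) := by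
        by_contra hc
        exact h1 ⟨h2, hc⟩
      exact Subtype.ext (mul_left_cancel (Set.mem_singleton_iff.mp h3))
    exact Set.infinite_of_injective_forall_mem hginj hmem hsols

end Aux

lemma sols_image {H K : Type*} [Semigroup H] [Semigroup K] (f : PowSg H ≃* PowSg K)
    (X : PowSg H) : f '' sols X = sols (f X) := by
  ext Y'
  constructor
  · rintro ⟨Y, hY, rfl⟩
    show f X * f Y = f X * (f X * f X)
    rw [← map_mul, ← map_mul, ← map_mul, hY]
  · intro h
    refine ⟨f.symm Y', ?_, f.apply_symm_apply Y'⟩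
    show X * f.symm Y' = X * (X * X)
    apply f.injective
    rw [map_mul, map_mul, map_mul, f.apply_symm_apply]
    exact h

/-- If `H` and `K` are cancellative commutative semigroups, every isomorphism
`f : P(H) → P(K)` maps the finite nonempty subsets of `H` bijectively onto the finite
nonempty subsets of `K`: since `f` is a bijection, this is equivalent to `X` finite iff
`f X` finite. -/
theorem stmt6 {H K : Type*} [CommSemigroup H] [IsCancelMul H] [CommSemigroup K]
    [IsCancelMul K] (f : PowSg H ≃* PowSg K) :
    ∀ X : PowSg H, X.1.Finite ↔ (f X).1.Finite := by
  intro X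
  rw [finite_iff_sols_finite, finite_iff_sols_finite]
  constructor
  · intro h
    rw [← sols_image f]
    exact h.image f
  · intro h
    rw [← sols_image f] at h
    exact Set.Finite.of_finite_image h f.injective.injOn
end

section
/- Let H be a monoid and D a submonoid of P(H) such that (c1) {1_H, x} ∈ D for all x ∈ H, and (c2) every idempotent of D contains 1_H. If an automorphism f of D fixes {1_H, x} for every x ∈ H, then f fixes every idempotent of D. -/
open Pointwise

/-- Let `H` be a monoid and `D` a submonoid of the power monoid of `H`
(subsets of `H` under setwise multiplication) such that (c1) `{1, x} ∈ D` for all `x ∈ H`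
and (c2) every idempotent of `D` contains `1`. If an automorphism `f` of `D` fixes each
`{1, x}`, then `f` fixes every idempotent of `D`. -/
theorem stmt8 {H : Type*} [Monoid H] (D : Submonoid (Set H))
    (h1 : ∀ x : H, ({1, x} : Set H) ∈ D)
    (h2 : ∀ E ∈ D, E * E = E → (1 : H) ∈ E)
    (f : D ≃* D)
    (hf : ∀ x : H, f ⟨{1, x}, h1 x⟩ = ⟨{1, x}, h1 x⟩) :
    ∀ E : D, E * E = E → f E = E := by
  -- key absorption lemma
  have key : ∀ E : D, E * E = E → ∀ x ∈ (E : Set H), E * ⟨{1, x}, h1 x⟩ = E := by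
    intro E hE x hx
    have hE' : (E : Set H) * (E : Set H) = (E : Set H) := by
      exact_mod_cast congrArg (Subtype.val) hE
    apply Subtype.ext
    show (E : Set H) * {1, x} = (E : Set H)
    apply Set.Subset.antisymm
    · rintro _ ⟨a, ha, b, hb, rfl⟩
      rcases hb with rfl | rfl
      · simpa using ha
      · rw [← hE']; exact Set.mul_mem_mul ha hx
    · intro a ha
      have : a * 1 ∈ (E : Set H) * {1, x} :=
        Set.mul_mem_mul ha (by simp)
      simpa using this
  intro E hE
  have hfE : f E * f E = f E := by rw [← map_mul, hE]
  have h1E : (1 : H) ∈ (E : Set H) := by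
    apply h2 (E : Set H) E.2
    exact_mod_cast congrArg (Subtype.val) hE
  have h1fE : (1 : H) ∈ ((f E : D) : Set H) := by
    apply h2 _ (f E).2
    exact_mod_cast congrArg (Subtype.val) hfE
  apply Subtype.ext
  apply Set.Subset.antisymm
  · -- f E ⊆ E
    intro x hx
    have k := key (f E) hfE x hx
    have : E * ⟨{1, x}, h1 x⟩ = E := by
      have hs : f.symm ⟨{1, x}, h1 x⟩ = ⟨{1, x}, h1 x⟩ := by
        conv_lhs => rw [← hf x, f.symm_apply_apply]
      have := congrArg f.symm k
      rw [map_mul, f.symm_apply_apply, hs] at this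
      exact this
    have hset : (E : Set H) * {1, x} = (E : Set H) := by
      simpa using congrArg (Subtype.val) this
    rw [← hset]
    exact (by simpa using Set.mul_mem_mul h1E (show x ∈ ({1, x} : Set H) by simp) :)
  · -- E ⊆ f E
    intro x hx
    have k := key E hE x hx
    have : f E * ⟨{1, x}, h1 x⟩ = f E := by
      have := congrArg f k
      rw [map_mul, hf x] at this
      exact this
    have hset : ((f E : D) : Set H) * {1, x} = ((f E : D) : Set H) := by
      simpa using congrArg (Subtype.val) this
    rw [← hset]
    exact (by simpa using Set.mul_mem_mul h1fE (show x ∈ ({1, x} : Set H) by simp) :)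
end

section
/- Let H be a numerical monoid, X a subset of H containing 0, and y a non-zero element of H. Define H_y := {0} ∪ (H ∩ Z_{≥y}) and H_y* := H_y \ {y}. Then y ∈ X if and only if H_y + X = H_y* + X. -/
open Pointwise

namespace Set

theorem add_eq_diff_singleton_add_of_add_mem {M : Type*} [Add M] {A X : Set M} {y : M}
    (h : ∀ x ∈ X, y + x ∈ (A \ {y}) + X) : A + X = (A \ {y}) + X := by
  refine (add_subset_add_right sdiff_subset).antisymm' ?_
  rintro _ ⟨a, ha, x, hx, rfl⟩
  by_cases hay : a = y
  · subst hay
    exact h x hx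
  · exact ⟨a, ⟨ha, hay⟩, x, hx, rfl⟩

theorem mem_of_add_eq_diff_singleton_add {M : Type*} [AddCommMonoid M] [PartialOrder M]
    [CanonicallyOrderedAdd M] {A X : Set M} {y : M} (hyA : y ∈ A) (hX0 : (0 : M) ∈ X)
    (hA : ∀ a ∈ A, a = 0 ∨ y ≤ a) (h : A + X = (A \ {y}) + X) : y ∈ X := by
  have hy : y ∈ (A \ {y}) + X := h ▸ ⟨y, hyA, 0, hX0, add_zero y⟩
  obtain ⟨a, ⟨ha, hay⟩, x, hx, hax⟩ := hy
  rcases hA a ha with rfl | hya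
  · simpa [← hax] using hx
  · exact absurd (le_antisymm (hax ▸ le_self_add) hya) hay

end Set

theorem stmt9_general (H : Set ℕ) (hadd : ∀ a ∈ H, ∀ b ∈ H, a + b ∈ H)
    (X : Set ℕ) (hX0 : 0 ∈ X) (hXH : X ⊆ H)
    (y : ℕ) (hy : y ∈ H) (hy0 : y ≠ 0) :
    y ∈ X ↔
      ({0} ∪ (H ∩ Set.Ici y)) + X = (({0} ∪ (H ∩ Set.Ici y)) \ {y}) + X := by
  constructor
  · intro hyX
    refine Set.add_eq_diff_singleton_add_of_add_mem ?_
    intro x hx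
    -- `y + 0` is rewritten as `0 + y`; for `x ≠ 0`, `y + x` already lies in `H_y \ {y}`.
    rcases eq_or_ne x 0 with rfl | hx0
    · exact ⟨0, ⟨Or.inl rfl, hy0.symm⟩, y, hyX, zero_add y⟩
    · have hyx : y + x ∈ H ∩ Set.Ici y := ⟨hadd y hy x (hXH hx), Set.mem_Ici.2 le_self_add⟩
      exact ⟨y + x, ⟨Or.inr hyx, by simpa using hx0⟩, 0, hX0, add_zero _⟩
  · refine Set.mem_of_add_eq_diff_singleton_add (Or.inr ⟨hy, Set.self_mem_Ici⟩) hX0 ?_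
    rintro a (rfl | ⟨-, ha⟩)
    exacts [Or.inl rfl, Or.inr ha]

/-- Let `H ⊆ ℕ` be a numerical monoid, `X ⊆ H` with `0 ∈ X`, and
`y ∈ H`, `y ≠ 0`. With `H_y = {0} ∪ (H ∩ [y, ∞))` and `H_y* = H_y \ {y}`, one has
`y ∈ X ↔ H_y + X = H_y* + X`. -/
theorem stmt9 (H : Set ℕ) (h0 : 0 ∈ H) (hadd : ∀ a ∈ H, ∀ b ∈ H, a + b ∈ H)
    (hcof : Hᶜ.Finite) (X : Set ℕ) (hX0 : 0 ∈ X) (hXH : X ⊆ H)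
    (y : ℕ) (hy : y ∈ H) (hy0 : y ≠ 0) :
    y ∈ X ↔
      ({0} ∪ (H ∩ Set.Ici y)) + X = (({0} ∪ (H ∩ Set.Ici y)) \ {y}) + X :=
  stmt9_general H hadd X hX0 hXH y hy hy0
end

section
/- Let H be a numerical semigroup and f an automorphism of the large power semigroup P(H). Then min f(X) = min X for every non-empty subset X of H. -/
/-!
Adding a tail `Z = [N, ∞) ⊆ H` erases everything but the minimum, `X + Z = [min X + N, ∞)`.
Hence an automorphism `f` sends sets with equal minima to sets with equal minima, and
`min ∘ f = g ∘ min` for a map `g` that is additive on `H` and permutes `H`. Additivity makes `g`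
proportional, `b * g a = a * g b`; comparing the least positive element `a₀` of `H` with
`g a₀` and with its preimage gives `g a₀ = a₀`, so `g` is the identity.
-/

open Pointwise

/-- A numerical semigroup: a cofinite additive subsemigroup of `ℕ`. -/
structure NumSgp where
  carrier : Set ℕ
  add_mem : ∀ {a b : ℕ}, a ∈ carrier → b ∈ carrier → a + b ∈ carrier
  cofinite : carrierᶜ.Finite

/-- The large power semigroup of a numerical semigroup `H`: nonempty subsets of `H`
under sumset addition. -/
def PS (H : NumSgp) : Type := {X : Set ℕ // X.Nonempty ∧ X ⊆ H.carrier}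

noncomputable instance (H : NumSgp) : Add (PS H) :=
  ⟨fun X Y => ⟨X.1 + Y.1, X.2.1.add Y.2.1, by
    rintro z ⟨a, ha, b, hb, rfl⟩
    exact H.add_mem (X.2.2 ha) (Y.2.2 hb)⟩⟩

section AdditiveOnNat

variable {S : Set ℕ} {g : ℕ → ℕ}

theorem mul_mem_of_add_mem (hS : ∀ {a b}, a ∈ S → b ∈ S → a + b ∈ S) {a n : ℕ} (ha : a ∈ S)
    (hn : 0 < n) : n * a ∈ S := by
  induction n, hn using Nat.le_induction with
  | base => simpa using ha
  | succ n _ ih => simpa [Nat.succ_mul] using hS ih ha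

theorem map_mul_of_map_add (hS : ∀ {a b}, a ∈ S → b ∈ S → a + b ∈ S)
    (hg : ∀ a ∈ S, ∀ b ∈ S, g (a + b) = g a + g b) {a n : ℕ} (ha : a ∈ S) (hn : 0 < n) :
    g (n * a) = n * g a := by
  induction n, hn using Nat.le_induction with
  | base => simp
  | succ n hn ih => rw [Nat.succ_mul, Nat.succ_mul, hg _ (mul_mem_of_add_mem hS ha hn) _ ha, ih]

theorem map_zero_of_map_add (hg : ∀ a ∈ S, ∀ b ∈ S, g (a + b) = g a + g b) (h0 : 0 ∈ S) :
    g 0 = 0 := by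
  simpa using hg 0 h0 0 h0

theorem mul_map_comm_of_map_add (hS : ∀ {a b}, a ∈ S → b ∈ S → a + b ∈ S)
    (hg : ∀ a ∈ S, ∀ b ∈ S, g (a + b) = g a + g b) {a b : ℕ} (ha : a ∈ S) (hb : b ∈ S) :
    b * g a = a * g b := by
  rcases Nat.eq_zero_or_pos a with rfl | ha₀
  · simp [map_zero_of_map_add hg ha]
  rcases Nat.eq_zero_or_pos b with rfl | hb₀
  · simp [map_zero_of_map_add hg hb]
  rw [← map_mul_of_map_add hS hg ha hb₀, ← map_mul_of_map_add hS hg hb ha₀, mul_comm]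

theorem eqOn_id_of_map_add (hS : ∀ {a b}, a ∈ S → b ∈ S → a + b ∈ S)
    (hg : ∀ a ∈ S, ∀ b ∈ S, g (a + b) = g a + g b) (hmaps : Set.MapsTo g S S)
    (hsurj : Set.SurjOn g S S) : Set.EqOn g id S := by
  have hcomm : ∀ {a b}, a ∈ S → b ∈ S → b * g a = a * g b := mul_map_comm_of_map_add hS hg
  by_cases hpos : ∃ a ∈ S, 0 < a
  · classical
    let a₀ := Nat.find hpos
    obtain ⟨ha₀, ha₀_pos⟩ : a₀ ∈ S ∧ 0 < a₀ := Nat.find_spec hpos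
    have hleast : ∀ b ∈ S, 0 < b → a₀ ≤ b := fun b hb hb₀ => Nat.find_min' hpos ⟨hb, hb₀⟩
    obtain ⟨d, hd, hgd⟩ := hsurj ha₀
    have hsq : a₀ * a₀ = d * g a₀ := by rw [← hcomm hd ha₀, hgd]
    have hprod : 0 < d * g a₀ := hsq ▸ Nat.mul_pos ha₀_pos ha₀_pos
    have hd_ge : a₀ ≤ d := hleast d hd (Nat.pos_of_mul_pos_right hprod)
    have hga₀_ge : a₀ ≤ g a₀ := hleast _ (hmaps ha₀) (Nat.pos_of_mul_pos_left hprod)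
    have hga₀ : g a₀ = a₀ := by nlinarith
    intro b hb
    have := hcomm hb ha₀
    rw [hga₀, mul_comm b] at this
    exact Nat.eq_of_mul_eq_mul_left ha₀_pos this
  · push Not at hpos
    intro b hb
    obtain rfl : b = 0 := Nat.eq_zero_of_le_zero (hpos b hb)
    exact map_zero_of_map_add hg hb

end AdditiveOnNat

theorem NumSgp.exists_Ici_subset (H : NumSgp) : ∃ N, Set.Ici N ⊆ H.carrier := by
  obtain ⟨M, hM⟩ := H.cofinite.bddAbove
  refine ⟨M + 1, fun n hn => ?_⟩
  by_contra hn'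
  exact absurd (hM hn') (by simp only [Set.mem_Ici] at hn; omega)

namespace PS

variable {H : NumSgp}

theorem sInf_mem (X : PS H) : sInf X.1 ∈ X.1 := Nat.sInf_mem X.2.1

theorem sInf_mem_carrier (X : PS H) : sInf X.1 ∈ H.carrier := X.2.2 X.sInf_mem

theorem sInf_add (X Y : PS H) : sInf (X + Y).1 = sInf X.1 + sInf Y.1 := by
  apply le_antisymm
  · exact Nat.sInf_le (Set.add_mem_add X.sInf_mem Y.sInf_mem)
  · apply le_csInf (X.2.1.add Y.2.1)
    rintro _ ⟨x, hx, y, hy, rfl⟩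
    exact add_le_add (Nat.sInf_le hx) (Nat.sInf_le hy)

def single (a : ℕ) (ha : a ∈ H.carrier) : PS H :=
  ⟨{a}, Set.singleton_nonempty a, Set.singleton_subset_iff.2 ha⟩

@[simp]
theorem sInf_single (a : ℕ) (ha : a ∈ H.carrier) : sInf (single a ha).1 = a := by
  simp [single]

def Ici (N : ℕ) (hN : Set.Ici N ⊆ H.carrier) : PS H :=
  ⟨Set.Ici N, Set.nonempty_Ici, hN⟩

theorem val_add_Ici (X : PS H) (N : ℕ) (hN : Set.Ici N ⊆ H.carrier) :
    (X + Ici N hN).1 = Set.Ici (sInf X.1 + N) := by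
  ext m
  constructor
  · rintro ⟨x, hx, n, hn, rfl⟩
    exact add_le_add (Nat.sInf_le hx) hn
  · intro hm
    rw [Set.mem_Ici] at hm
    exact ⟨sInf X.1, X.sInf_mem, m - sInf X.1, show N ≤ m - sInf X.1 by omega,
      show sInf X.1 + (m - sInf X.1) = m by omega⟩

theorem add_Ici_eq_add_Ici {X Y : PS H} (h : sInf X.1 = sInf Y.1) (N : ℕ)
    (hN : Set.Ici N ⊆ H.carrier) : X + Ici N hN = Y + Ici N hN :=
  Subtype.ext (by rw [val_add_Ici, val_add_Ici, h])

variable {F : Type*} [FunLike F (PS H) (PS H)] [AddHomClass F (PS H) (PS H)]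

theorem sInf_map_eq_of_sInf_eq (f : F) {X Y : PS H} (h : sInf X.1 = sInf Y.1) :
    sInf (f X).1 = sInf (f Y).1 := by
  obtain ⟨N, hN⟩ := H.exists_Ici_subset
  have := congrArg (fun W : PS H => sInf (f W).1) (add_Ici_eq_add_Ici h N hN)
  simp only [map_add, sInf_add] at this
  omega

open Classical in
noncomputable def minMap (f : F) (a : ℕ) : ℕ :=
  if ha : a ∈ H.carrier then sInf (f (single a ha)).1 else 0

theorem sInf_map (f : F) (X : PS H) : sInf (f X).1 = minMap f (sInf X.1) := by
  rw [minMap, dif_pos X.sInf_mem_carrier]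
  exact sInf_map_eq_of_sInf_eq f (sInf_single _ _).symm

theorem minMap_add (f : F) : ∀ a ∈ H.carrier, ∀ b ∈ H.carrier,
    minMap f (a + b) = minMap f a + minMap f b := by
  intro a ha b hb
  have := sInf_map f (single a ha + single b hb)
  rwa [map_add, sInf_add, sInf_add, sInf_map, sInf_map, sInf_single, sInf_single, eq_comm] at this

theorem mapsTo_minMap (f : F) : Set.MapsTo (minMap f) H.carrier H.carrier := fun a ha => by
  rw [← sInf_single a ha, ← sInf_map]
  exact sInf_mem_carrier _

theorem surjOn_minMap (f : PS H ≃+ PS H) : Set.SurjOn (minMap f) H.carrier H.carrier :=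
  fun a ha => ⟨_, sInf_mem_carrier (f.symm (single a ha)), by
    rw [← sInf_map, AddEquiv.apply_symm_apply, sInf_single]⟩

end PS

/-- Every automorphism of the large power semigroup of a numerical
semigroup preserves minima: `min f(X) = min X`. -/
theorem stmt12 (H : NumSgp) (f : PS H ≃+ PS H) :
    ∀ X : PS H, sInf (f X).1 = sInf X.1 := by
  have hid : Set.EqOn (PS.minMap f) id H.carrier :=
    eqOn_id_of_map_add H.add_mem (PS.minMap_add f) (PS.mapsTo_minMap f) (PS.surjOn_minMap f)
  intro X
  rw [PS.sInf_map, hid X.sInf_mem_carrier, id]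
end

section
/- Let H be a numerical semigroup and T the set of cancellative elements of P(H) (equivalently, the singletons {x} with x ∈ H). Then the map sending the ∼_T-class of a non-empty subset X of H to X − min X is a well-defined semigroup isomorphism from the quotient P(H)/∼_T onto P_0(N), the monoid of subsets of N containing 0 under sumset addition. -/
open Pointwise

lemma stmt15_inf_add (X Y : Set ℕ) (hX : X.Nonempty) (hY : Y.Nonempty) :
    sInf (X + Y) = sInf X + sInf Y := by
  apply le_antisymm
  · exact Nat.sInf_le (Set.add_mem_add (Nat.sInf_mem hX) (Nat.sInf_mem hY))
  · have h := Nat.sInf_mem (hX.add hY)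
    rw [Set.mem_add] at h
    obtain ⟨x, hx, y, hy, hxy⟩ := h
    have h1 := Nat.sInf_le hx
    have h2 := Nat.sInf_le hy
    omega

lemma stmt15_img_add (X Y : Set ℕ) (hX : X.Nonempty) (hY : Y.Nonempty) :
    (fun m => m - sInf (X + Y)) '' (X + Y) =
      ((fun m => m - sInf X) '' X) + ((fun m => m - sInf Y) '' Y) := by
  rw [stmt15_inf_add X Y hX hY]
  ext n
  simp only [Set.mem_image, Set.mem_add]
  constructor
  · rintro ⟨m, hm, rfl⟩
    obtain ⟨x, hx, y, hy, rfl⟩ := hm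
    refine ⟨x - sInf X, ⟨x, hx, rfl⟩, y - sInf Y, ⟨y, hy, rfl⟩, ?_⟩
    have h1 := Nat.sInf_le hx
    have h2 := Nat.sInf_le hy
    omega
  · rintro ⟨a, ⟨x, hx, rfl⟩, b, ⟨y, hy, rfl⟩, rfl⟩
    refine ⟨x + y, Set.add_mem_add hx hy, ?_⟩
    have h1 := Nat.sInf_le hx
    have h2 := Nat.sInf_le hy
    omega

lemma stmt15_unshift (X : Set ℕ) (hX : X.Nonempty) :
    ((fun m => m - sInf X) '' X) + {sInf X} = X := by
  ext z
  simp only [Set.mem_add, Set.mem_image, Set.mem_singleton_iff]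
  constructor
  · rintro ⟨a, ⟨x, hx, rfl⟩, b, rfl, rfl⟩
    have h1 := Nat.sInf_le hx
    rw [Nat.sub_add_cancel h1]
    exact hx
  · intro hz
    exact ⟨z - sInf X, ⟨z, hz, rfl⟩, sInf X, rfl, Nat.sub_add_cancel (Nat.sInf_le hz)⟩

lemma stmt15_shift (X : Set ℕ) (hX : X.Nonempty) (u : ℕ) :
    (fun m => m - sInf (X + ({u} : Set ℕ))) '' (X + {u}) = (fun m => m - sInf X) '' X := by
  rw [stmt15_img_add X {u} hX ⟨u, rfl⟩]
  have h1 : sInf ({u} : Set ℕ) = u := csInf_singleton u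
  have h2 : (fun m => m - sInf ({u} : Set ℕ)) '' {u} = {0} := by
    rw [Set.image_singleton, h1, Nat.sub_self]
  rw [h2, Set.add_singleton]
  simp

/-- Let `H ⊆ ℕ` be a numerical semigroup and `∼` the `T`-conjugacy relation
on `P(H)` where `T` is the set of cancellative elements of `P(H)`, i.e., the singletons
`{u}` with `u ∈ H`. The map sending the class of `X` to `X - min X` is a well-defined
semigroup isomorphism from `P(H)/∼` onto `P_0(ℕ)`. Concretely: the map
`φ X = (· - min X) '' X` is constant exactly on `∼`-classes (well-defined and injective
on the quotient), is surjective onto the subsets of `ℕ` containing `0`, and is additive. -/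
theorem stmt15 (H : Set ℕ) (hadd : ∀ a ∈ H, ∀ b ∈ H, a + b ∈ H) (hcof : Hᶜ.Finite) :
    (∀ X Y : Set ℕ, X.Nonempty → X ⊆ H → Y.Nonempty → Y ⊆ H →
      ((X = Y ∨ ∃ u ∈ H, ∃ v ∈ H, X + {u} = Y + {v}) ↔
        (fun m => m - sInf X) '' X = (fun m => m - sInf Y) '' Y)) ∧
    (∀ A : Set ℕ, 0 ∈ A →
      ∃ X : Set ℕ, X.Nonempty ∧ X ⊆ H ∧ (fun m => m - sInf X) '' X = A) ∧
    (∀ X : Set ℕ, X.Nonempty → X ⊆ H → (0 : ℕ) ∈ (fun m => m - sInf X) '' X) ∧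
    (∀ X Y : Set ℕ, X.Nonempty → X ⊆ H → Y.Nonempty → Y ⊆ H →
      (fun m => m - sInf (X + Y)) '' (X + Y) =
        ((fun m => m - sInf X) '' X) + ((fun m => m - sInf Y) '' Y)) := by
  refine ⟨?_, ?_, ?_, ?_⟩
  · intro X Y hXne hXH hYne hYH
    constructor
    · rintro (rfl | ⟨u, hu, v, hv, h⟩)
      · rfl
      · have := stmt15_shift X hXne u
        rw [h, stmt15_shift Y hYne v] at this
        exact this.symm
    · intro h
      right
      refine ⟨sInf Y, hYH (Nat.sInf_mem hYne), sInf X, hXH (Nat.sInf_mem hXne), ?_⟩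
      calc X + {sInf Y} = ((fun m => m - sInf X) '' X + {sInf X}) + {sInf Y} := by
              rw [stmt15_unshift X hXne]
        _ = ((fun m => m - sInf Y) '' Y + {sInf Y}) + {sInf X} := by
              rw [h, add_assoc, add_assoc, add_comm ({sInf X} : Set ℕ) {sInf Y}]
        _ = Y + {sInf X} := by rw [stmt15_unshift Y hYne]
  · intro A hA
    obtain ⟨N, hN⟩ : ∃ N : ℕ, ∀ n, N ≤ n → n ∈ H := by
      refine ⟨hcof.toFinset.sup id + 1, fun n hn => ?_⟩
      by_contra hc
      have : n ∈ hcof.toFinset := hcof.mem_toFinset.2 hc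
      have := Finset.le_sup (f := id) this
      simp only [id] at this
      omega
    have hNmem : N ∈ (fun a => a + N) '' A := ⟨0, hA, by simp⟩
    refine ⟨(fun a => a + N) '' A, ⟨N, hNmem⟩, ?_, ?_⟩
    · rintro x ⟨a, _, rfl⟩
      exact hN _ (Nat.le_add_left N a)
    · have hinf : sInf ((fun a => a + N) '' A) = N := by
        apply le_antisymm (Nat.sInf_le hNmem)
        apply le_csInf ⟨N, hNmem⟩
        rintro b ⟨a, _, rfl⟩
        exact Nat.le_add_left N a
      rw [hinf, ← Set.image_comp]
      have hc : ((fun m => m - N) ∘ fun a => a + N) = id := by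
        funext a; simp
      rw [hc, Set.image_id]
  · intro X hXne hXH
    exact ⟨sInf X, Nat.sInf_mem hXne, Nat.sub_self _⟩
  · intro X Y hXne _ hYne _
    exact stmt15_img_add X Y hXne hYne
end

section
/- For every numerical semigroup H, the automorphism group of the large power semigroup P(H) is trivial; that is, the only automorphism of P(H) is the identity. -/
open Pointwise

namespace S16

variable {H : NumSgp}

lemma add_val (A B : PS H) : (A + B).1 = A.1 + B.1 := rfl

lemma ps_ext {A B : PS H} (h : A.1 = B.1) : A = B := Subtype.ext h

lemma mem_addset {X Y : Set ℕ} {n : ℕ} :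
    n ∈ X + Y ↔ ∃ x ∈ X, ∃ y ∈ Y, x + y = n := Set.mem_add

noncomputable def mu (A : PS H) : ℕ := sInf A.1

lemma mu_mem (A : PS H) : mu A ∈ A.1 := Nat.sInf_mem A.2.1

lemma mu_le {A : PS H} {n : ℕ} (h : n ∈ A.1) : mu A ≤ n := Nat.sInf_le h

lemma mu_inH (A : PS H) : mu A ∈ H.carrier := A.2.2 (mu_mem A)

lemma mu_add (A B : PS H) : mu (A + B) = mu A + mu B := by
  apply le_antisymm
  · exact Nat.sInf_le (mem_addset.mpr ⟨_, mu_mem A, _, mu_mem B, rfl⟩)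
  · apply le_csInf (A + B).2.1
    intro n hn
    obtain ⟨x, hx, y, hy, rfl⟩ := mem_addset.mp hn
    exact Nat.add_le_add (mu_le hx) (mu_le hy)

lemma addIci {X : Set ℕ} {a k : ℕ} (ha : a ∈ X) (hmin : ∀ x ∈ X, a ≤ x) :
    X + Set.Ici k = Set.Ici (a + k) := by
  ext n
  simp only [Set.mem_Ici]
  constructor
  · intro hn
    obtain ⟨x, hx, y, hy, rfl⟩ := mem_addset.mp hn
    have h1 := hmin x hx
    have h2 : k ≤ y := hy
    omega
  · intro hn
    exact mem_addset.mpr ⟨a, ha, n - a, by simp only [Set.mem_Ici]; omega, by omega⟩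

section C

variable (c : ℕ) (hc : ∀ n, c ≤ n → n ∈ H.carrier)

def sing (a : ℕ) (ha : a ∈ H.carrier) : PS H := ⟨{a}, ⟨a, rfl⟩, by simpa using ha⟩

@[simp] lemma sing_val (a : ℕ) (ha : a ∈ H.carrier) : (sing a ha).1 = {a} := rfl

lemma mu_sing (a : ℕ) (ha : a ∈ H.carrier) : mu (sing a ha) = a := by
  simp [mu, sing]

def tailc : PS H := ⟨Set.Ici c, ⟨c, Set.mem_Ici.mpr le_rfl⟩, fun n hn => hc n hn⟩

lemma sing_add_sing (a b : ℕ) (ha : a ∈ H.carrier) (hb : b ∈ H.carrier) :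
    sing a ha + sing b hb = sing (a + b) (H.add_mem ha hb) := by
  apply ps_ext
  rw [add_val]
  simp [Set.singleton_add_singleton]

variable (g : PS H ≃+ PS H)

open Classical in
noncomputable def sig (a : ℕ) : ℕ :=
  if h : a ∈ H.carrier then mu (g (sing a h)) else a

lemma sig_eq (a : ℕ) (ha : a ∈ H.carrier) : sig g a = mu (g (sing a ha)) := dif_pos ha

lemma sig_inH (a : ℕ) (ha : a ∈ H.carrier) : sig g a ∈ H.carrier := by
  rw [sig_eq g a ha]; exact mu_inH _

lemma sig_add (a b : ℕ) (ha : a ∈ H.carrier) (hb : b ∈ H.carrier) :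
    sig g (a + b) = sig g a + sig g b := by
  rw [sig_eq g _ (H.add_mem ha hb), sig_eq g a ha, sig_eq g b hb,
    ← sing_add_sing a b ha hb, map_add, mu_add]

include hc in
lemma mu_g (A : PS H) : mu (g A) = sig g (mu A) := by
  have key : A + tailc c hc = sing (mu A) (mu_inH A) + tailc c hc := by
    apply ps_ext
    rw [add_val, add_val]
    show A.1 + Set.Ici c = {mu A} + Set.Ici c
    rw [addIci (mu_mem A) (fun _ h => mu_le h),
        addIci (Set.mem_singleton (mu A)) (fun x hx => le_of_eq (Set.eq_of_mem_singleton hx).symm)]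
  have h2 := congrArg mu (congrArg g key)
  rw [map_add, map_add, mu_add, mu_add, ← sig_eq g _ (mu_inH A)] at h2
  omega

lemma H_nsmul {a : ℕ} (ha : a ∈ H.carrier) : ∀ k : ℕ, k ≠ 0 → k * a ∈ H.carrier := by
  intro k
  induction k with
  | zero => intro h; exact absurd rfl h
  | succ n ih =>
    intro _
    rcases Nat.eq_zero_or_pos n with h | h
    · subst h; simpa using ha
    · have : (n + 1) * a = n * a + a := by ring
      rw [this]
      exact H.add_mem (ih (by omega)) ha

lemma sig_nsmul {a : ℕ} (ha : a ∈ H.carrier) : ∀ k : ℕ, k ≠ 0 → sig g (k * a) = k * sig g a := by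
  intro k
  induction k with
  | zero => intro h; exact absurd rfl h
  | succ n ih =>
    intro _
    rcases Nat.eq_zero_or_pos n with h | h
    · subst h; simp
    · have e1 : (n + 1) * a = n * a + a := by ring
      rw [e1, sig_add g _ _ (H_nsmul ha n (by omega)) ha, ih (by omega)]
      ring

lemma sig_cross {a b : ℕ} (ha : a ∈ H.carrier) (hb : b ∈ H.carrier)
    (a0 : a ≠ 0) (b0 : b ≠ 0) : b * sig g a = a * sig g b := by
  have h1 := sig_nsmul g ha b b0
  have h2 := sig_nsmul g hb a a0
  rw [mul_comm b a] at h1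
  rw [h1] at h2
  exact h2

include hc in
lemma sig_symm_sig (a : ℕ) (ha : a ∈ H.carrier) : sig g.symm (sig g a) = a := by
  have h := mu_g c hc g.symm (g (sing a ha))
  rw [g.symm_apply_apply, mu_sing, ← sig_eq g a ha] at h
  omega

include hc in
lemma sig_pos {a : ℕ} (ha : a ∈ H.carrier) (a0 : a ≠ 0) : sig g a ≠ 0 := by
  intro h0
  have hall : ∀ x, x ∈ H.carrier → x ≠ 0 → sig g x = 0 := by
    intro x hx x0
    have hcr := sig_cross g ha hx a0 x0
    rw [h0, Nat.mul_zero] at hcr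
    exact (Nat.mul_eq_zero.mp hcr.symm).resolve_left a0
  have e1 := sig_symm_sig c hc g (c+1) (hc _ (by omega))
  have e2 := sig_symm_sig c hc g (c+2) (hc _ (by omega))
  rw [hall _ (hc _ (by omega)) (by omega)] at e1
  rw [hall _ (hc _ (by omega)) (by omega)] at e2
  omega

include hc in
lemma no_desc : ¬ ∃ a, a ∈ H.carrier ∧ a ≠ 0 ∧ sig g a < a := by
  rintro ⟨a, ha, a0, hlt⟩
  have hall : ∀ x, x ∈ H.carrier → x ≠ 0 → sig g x < x := by
    intro x hx x0
    have hcr := sig_cross g ha hx a0 x0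
    have hx0 : 0 < x := Nat.pos_of_ne_zero x0
    have h1 : x * sig g a < x * a := (Nat.mul_lt_mul_left hx0).mpr hlt
    have h2 : a * sig g x < a * x := by rw [← hcr, mul_comm a x]; exact h1
    exact Nat.lt_of_mul_lt_mul_left h2
  have hPne : {x | x ∈ H.carrier ∧ x ≠ 0}.Nonempty := ⟨a, ha, a0⟩
  have hmem := Nat.sInf_mem hPne
  have hs : sig g (sInf {x | x ∈ H.carrier ∧ x ≠ 0}) ∈ {x | x ∈ H.carrier ∧ x ≠ 0} :=
    ⟨sig_inH g _ hmem.1, sig_pos c hc g hmem.1 hmem.2⟩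
  have hle := Nat.sInf_le hs
  have hlt2 := hall _ hmem.1 hmem.2
  omega

include hc in
lemma sig_id (a : ℕ) (ha : a ∈ H.carrier) : sig g a = a := by
  by_cases a0 : a = 0
  · subst a0
    have := sig_add g 0 0 ha ha
    simp at this
    omega
  · rcases lt_trichotomy (sig g a) a with h | h | h
    · exact absurd ⟨a, ha, a0, h⟩ (no_desc c hc g)
    · exact h
    · exfalso
      apply no_desc c hc g.symm
      exact ⟨sig g a, sig_inH g a ha, sig_pos c hc g ha a0,
        by rw [sig_symm_sig c hc g a ha]; exact h⟩

include hc in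
lemma mu_fix (A : PS H) : mu (g A) = mu A := by
  rw [mu_g c hc g, sig_id c hc g _ (mu_inH A)]


omit hc in
lemma cancel_sing {C D : PS H} {a : ℕ} {ha : a ∈ H.carrier}
    (h : C + sing a ha = D + sing a ha) : C = D := by
  apply ps_ext
  have h1 : C.1 + {a} = D.1 + {a} := congrArg Subtype.val h
  ext x
  constructor <;> intro hx
  · have hmem : x + a ∈ D.1 + {a} := h1 ▸ mem_addset.mpr ⟨x, hx, a, rfl, rfl⟩
    obtain ⟨y, hy, z, hz, hzz⟩ := mem_addset.mp hmem
    have hz' : z = a := hz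
    have : y = x := by omega
    exact this ▸ hy
  · have hmem : x + a ∈ C.1 + {a} := h1 ▸ mem_addset.mpr ⟨x, hx, a, rfl, rfl⟩
    obtain ⟨y, hy, z, hz, hzz⟩ := mem_addset.mp hmem
    have hz' : z = a := hz
    have : y = x := by omega
    exact this ▸ hy

include hc in
lemma f_tail (A : PS H) (k : ℕ) (hA : A.1 = Set.Ici k) : g A = A := by
  have hmuA : mu A = k := by rw [mu, hA]; exact csInf_Ici
  have key : ∀ C D : PS H, mu C = mu D → C + g A = D + g A := by
    intro C D h
    have h1 : g.symm C + A = g.symm D + A := by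
      apply ps_ext
      rw [add_val, add_val, hA, addIci (mu_mem _) (fun _ hx => mu_le hx),
          addIci (mu_mem _) (fun _ hx => mu_le hx), mu_fix c hc g.symm, mu_fix c hc g.symm, h]
    have h2 := congrArg g h1
    rwa [map_add, map_add, g.apply_symm_apply, g.apply_symm_apply] at h2
  have hcH : c ∈ H.carrier := hc c le_rfl
  have hpairH : ({c, c+1} : Set ℕ) ⊆ H.carrier := by
    intro n hn
    rcases hn with hn | hn
    · exact hn ▸ hcH
    · have : n = c + 1 := hn
      exact this ▸ hc _ (by omega)
  have hmupair : mu (⟨{c, c+1}, ⟨c, by simp⟩, hpairH⟩ : PS H) = c := by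
    apply le_antisymm
    · exact Nat.sInf_le (by simp)
    · apply le_csInf ⟨c, by simp⟩
      intro n hn
      rcases hn with hn | hn
      · omega
      · have : n = c + 1 := hn
        omega
  have hpair := key (sing c hcH) ⟨{c, c+1}, ⟨c, by simp⟩, hpairH⟩ (by rw [mu_sing, hmupair])
  have hpval : ({c} : Set ℕ) + (g A).1 = ({c, c+1} : Set ℕ) + (g A).1 := congrArg Subtype.val hpair
  have hstep : ∀ v ∈ (g A).1, v + 1 ∈ (g A).1 := by
    intro v hv
    have hmm : c + 1 + v ∈ ({c, c+1} : Set ℕ) + (g A).1 :=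
      mem_addset.mpr ⟨c+1, by simp, v, hv, by ring⟩
    rw [← hpval] at hmm
    obtain ⟨x, hx, y, hy, hxy⟩ := mem_addset.mp hmm
    have hx' : x = c := hx
    have : y = v + 1 := by omega
    exact this ▸ hy
  have hup : ∀ n, k ≤ n → n ∈ (g A).1 := by
    intro n hn
    induction n, hn using Nat.le_induction with
    | base =>
      have := mu_mem (g A)
      rwa [mu_fix c hc g, hmuA] at this
    | succ n hn ih => exact hstep _ ih
  apply ps_ext
  rw [hA]
  apply Set.Subset.antisymm
  · intro n hn
    have := mu_le hn
    rw [mu_fix c hc g, hmuA] at this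
    exact this
  · intro n hn
    exact hup n hn

include hc in
lemma f_sing (a : ℕ) (ha : a ∈ H.carrier) : g (sing a ha) = sing a ha := by
  have hmuS : mu (g (sing a ha)) = a := by rw [mu_fix c hc g, mu_sing]
  have haS : a ∈ (g (sing a ha)).1 := by
    have := mu_mem (g (sing a ha)); rwa [hmuS] at this
  have hsub : (g (sing a ha)).1 ⊆ {a} := by
    intro s hs
    by_contra hne
    have hne' : s ≠ a := hne
    have hsa : a < s := lt_of_le_of_ne (hmuS ▸ mu_le hs) (Ne.symm hne')
    have hd1 : 1 ≤ s - a := by omega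
    have hBsub : Set.Ici c \ {c + (s - a)} ⊆ H.carrier := fun n hn => hc n hn.1
    have hBne : (Set.Ici c \ {c + (s - a)}).Nonempty := ⟨c, by simp; omega⟩
    obtain ⟨B, hBval⟩ : ∃ B : PS H, B.1 = Set.Ici c \ {c + (s - a)} := ⟨⟨_, hBne, hBsub⟩, rfl⟩
    have hABeq : tailc c hc + g (sing a ha) = B + g (sing a ha) := by
      apply ps_ext
      rw [add_val, add_val, hBval]
      show Set.Ici c + (g (sing a ha)).1 = (Set.Ici c \ {c + (s - a)}) + (g (sing a ha)).1
      have e1 : Set.Ici c + (g (sing a ha)).1 = Set.Ici (c + a) := by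
        apply Set.Subset.antisymm
        · intro n hn
          obtain ⟨x, hx, y, hy, rfl⟩ := mem_addset.mp hn
          have h1 : c ≤ x := hx
          have h2 : a ≤ y := hmuS ▸ mu_le hy
          simp only [Set.mem_Ici]; omega
        · intro n hn
          have hn' : c + a ≤ n := hn
          exact mem_addset.mpr ⟨n - a, by simp only [Set.mem_Ici]; omega, a, haS, by omega⟩
      have e2 : (Set.Ici c \ {c + (s - a)}) + (g (sing a ha)).1 = Set.Ici (c + a) := by
        apply Set.Subset.antisymm
        · intro n hn
          obtain ⟨x, hx, y, hy, rfl⟩ := mem_addset.mp hn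
          have h1 : c ≤ x := hx.1
          have h2 : a ≤ y := hmuS ▸ mu_le hy
          simp only [Set.mem_Ici]; omega
        · intro n hn
          have hn' : c + a ≤ n := hn
          by_cases hcase : n - a = c + (s - a)
          · refine mem_addset.mpr ⟨c, ⟨Set.mem_Ici.mpr le_rfl, by simp; omega⟩, s, hs, by omega⟩
          · exact mem_addset.mpr ⟨n - a, ⟨by simp only [Set.mem_Ici]; omega, by simp [hcase]⟩,
              a, haS, by omega⟩
      rw [e1, e2]
    have h3 := congrArg g.symm hABeq
    rw [map_add, map_add, g.symm_apply_apply] at h3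
    have h5 := g.symm.injective (cancel_sing h3)
    have h6 : (c + (s - a) : ℕ) ∈ Set.Ici c \ {c + (s - a)} := by
      rw [← hBval, ← congrArg Subtype.val h5]
      show c + (s - a) ∈ Set.Ici c
      simp
    simp at h6
  apply ps_ext
  apply Set.Subset.antisymm hsub
  intro x hx
  have hx' : x = a := hx
  subst hx'
  exact haS


/-! ### Monoid lattice -/

omit hc in
lemma set_cancel_sing {X Z : Set ℕ} {a : ℕ} (h : ({a} : Set ℕ) + X = {a} + Z) : X = Z := by
  ext x
  constructor <;> intro hx
  · have hmem : a + x ∈ ({a} : Set ℕ) + Z := h ▸ mem_addset.mpr ⟨a, rfl, x, hx, rfl⟩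
    obtain ⟨y, hy, z, hz, hzz⟩ := mem_addset.mp hmem
    have hy' : y = a := hy
    have : z = x := by omega
    exact this ▸ hz
  · have hmem : a + x ∈ ({a} : Set ℕ) + X := h ▸ mem_addset.mpr ⟨a, rfl, x, hx, rfl⟩
    obtain ⟨y, hy, z, hz, hzz⟩ := mem_addset.mp hmem
    have hy' : y = a := hy
    have : z = x := by omega
    exact this ▸ hz

def Mon (Y : Set ℕ) : Prop := 0 ∈ Y ∧ ∀ ⦃x y⦄, x ∈ Y → y ∈ Y → x + y ∈ Y

omit hc in
lemma Mon.addSelf {Y : Set ℕ} (h : Mon Y) : Y + Y = Y := by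
  ext n
  constructor
  · intro hn
    obtain ⟨x, hx, y, hy, rfl⟩ := mem_addset.mp hn
    exact h.2 hx hy
  · intro hn
    exact mem_addset.mpr ⟨0, h.1, n, hn, by omega⟩

omit hc in
lemma Mon.addMon {Y Z : Set ℕ} (hY : Mon Y) (hZ : Mon Z) : Mon (Y + Z) := by
  constructor
  · exact mem_addset.mpr ⟨0, hY.1, 0, hZ.1, rfl⟩
  · intro x y hx hy
    obtain ⟨x1, hx1, x2, hx2, rfl⟩ := mem_addset.mp hx
    obtain ⟨y1, hy1, y2, hy2, rfl⟩ := mem_addset.mp hy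
    exact mem_addset.mpr ⟨x1 + y1, hY.2 hx1 hy1, x2 + y2, hZ.2 hx2 hy2, by ring⟩

omit hc in
lemma Mon.sub_iff {Y Z : Set ℕ} (hY : Mon Y) (hZ : Mon Z) : Y ⊆ Z ↔ Y + Z = Z := by
  constructor
  · intro h
    ext n
    constructor
    · intro hn
      obtain ⟨x, hx, y, hy, rfl⟩ := mem_addset.mp hn
      exact hZ.2 (h hx) hy
    · intro hn
      exact mem_addset.mpr ⟨0, hY.1, n, hn, by omega⟩
  · intro h n hn
    have : n + 0 ∈ Y + Z := mem_addset.mpr ⟨n, hn, 0, hZ.1, rfl⟩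
    rw [h] at this
    simpa using this

def enc (Y : Set ℕ) (hY : 0 ∈ Y) : PS H :=
  ⟨(c + ·) '' Y, ⟨c, ⟨0, hY, rfl⟩⟩, by
    rintro n ⟨y, hy, rfl⟩
    exact hc _ (Nat.le_add_right c y)⟩

omit hc in
lemma mem_img {Y : Set ℕ} {n : ℕ} : n ∈ (c + ·) '' Y ↔ ∃ y ∈ Y, c + y = n := by
  simp [Set.mem_image]

lemma enc_val (Y : Set ℕ) (hY : 0 ∈ Y) : (enc c hc Y hY).1 = (c + ·) '' Y := rfl

lemma mu_enc (Y : Set ℕ) (hY : 0 ∈ Y) : mu (enc c hc Y hY) = c := by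
  apply le_antisymm
  · exact mu_le (by rw [enc_val]; exact (mem_img c).mpr ⟨0, hY, rfl⟩)
  · apply le_csInf (enc c hc Y hY).2.1
    rintro n ⟨y, hy, rfl⟩
    exact Nat.le_add_right c y

def dec (A : PS H) : Set ℕ := {n | c + n ∈ A.1}

omit hc in
lemma img_inj {Y Z : Set ℕ} (h : (c + ·) '' Y = (c + ·) '' Z) : Y = Z := by
  ext n
  constructor <;> intro hn
  · have : c + n ∈ (c + ·) '' Z := h ▸ (mem_img c).mpr ⟨n, hn, rfl⟩
    obtain ⟨z, hz, hzz⟩ := (mem_img c).mp this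
    have : z = n := by omega
    exact this ▸ hz
  · have : c + n ∈ (c + ·) '' Y := h ▸ (mem_img c).mpr ⟨n, hn, rfl⟩
    obtain ⟨z, hz, hzz⟩ := (mem_img c).mp this
    have : z = n := by omega
    exact this ▸ hz

lemma dec_enc (Y : Set ℕ) (hY : 0 ∈ Y) : dec c (enc c hc Y hY) = Y := by
  ext n
  simp only [dec, Set.mem_setOf_eq, enc_val, mem_img c]
  constructor
  · rintro ⟨y, hy, hyy⟩
    have : y = n := by omega
    exact this ▸ hy
  · intro hn
    exact ⟨n, hn, rfl⟩

omit hc in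
lemma img_add_img (Y Z : Set ℕ) :
    ((c + ·) '' Y) + ((c + ·) '' Z) = ({c} : Set ℕ) + ((c + ·) '' (Y + Z)) := by
  ext n
  constructor
  · intro hn
    obtain ⟨x, hx, y, hy, rfl⟩ := mem_addset.mp hn
    obtain ⟨u, hu, rfl⟩ := (mem_img c).mp hx
    obtain ⟨v, hv, rfl⟩ := (mem_img c).mp hy
    exact mem_addset.mpr ⟨c, rfl, c + (u + v),
      (mem_img c).mpr ⟨u + v, mem_addset.mpr ⟨u, hu, v, hv, rfl⟩, rfl⟩, by ring⟩
  · intro hn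
    obtain ⟨x, hx, y, hy, rfl⟩ := mem_addset.mp hn
    have hx' : x = c := hx
    obtain ⟨w, hw, rfl⟩ := (mem_img c).mp hy
    obtain ⟨u, hu, v, hv, rfl⟩ := mem_addset.mp hw
    exact mem_addset.mpr ⟨c + u, (mem_img c).mpr ⟨u, hu, rfl⟩,
      c + v, (mem_img c).mpr ⟨v, hv, rfl⟩, by omega⟩

open Classical in
noncomputable def Fm (g : PS H ≃+ PS H) (Y : Set ℕ) : Set ℕ :=
  if hY : 0 ∈ Y then dec c (g (enc c hc Y hY)) else Y

lemma Fm_def (g : PS H ≃+ PS H) (Y : Set ℕ) (hY : 0 ∈ Y) :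
    Fm c hc g Y = dec c (g (enc c hc Y hY)) := dif_pos hY

include hc in
lemma enc_self (Y : Set ℕ) (hM : Mon Y) :
    enc c hc Y hM.1 + enc c hc Y hM.1 = sing c (hc c le_rfl) + enc c hc Y hM.1 := by
  apply ps_ext
  rw [add_val, add_val, enc_val, sing_val, img_add_img, hM.addSelf]

include hc in
lemma Fm_img (g : PS H ≃+ PS H) {Y : Set ℕ} (hM : Mon Y) :
    (g (enc c hc Y hM.1)).1 = (c + ·) '' (Fm c hc g Y) := by
  have hmuB : mu (g (enc c hc Y hM.1)) = c := by rw [mu_fix c hc g, mu_enc]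
  have h1 : g (enc c hc Y hM.1) + g (enc c hc Y hM.1) =
      sing c (hc c le_rfl) + g (enc c hc Y hM.1) := by
    rw [← map_add, enc_self c hc Y hM, map_add, f_sing c hc g]
  have h1v : (g (enc c hc Y hM.1)).1 + (g (enc c hc Y hM.1)).1 =
      ({c} : Set ℕ) + (g (enc c hc Y hM.1)).1 := congrArg Subtype.val h1
  rw [Fm_def c hc g Y hM.1]
  apply Set.Subset.antisymm
  · intro b hb
    have hbc : c ≤ b := hmuB ▸ mu_le hb
    refine (mem_img c).mpr ⟨b - c, ?_, by omega⟩
    show c + (b - c) ∈ (g (enc c hc Y hM.1)).1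
    have : c + (b - c) = b := by omega
    rwa [this]
  · rintro n ⟨m, hm, rfl⟩
    exact hm

include hc in
lemma Fm_mon (g : PS H ≃+ PS H) {Y : Set ℕ} (hM : Mon Y) : Mon (Fm c hc g Y) := by
  have hmuB : mu (g (enc c hc Y hM.1)) = c := by rw [mu_fix c hc g, mu_enc]
  have h1 : g (enc c hc Y hM.1) + g (enc c hc Y hM.1) =
      sing c (hc c le_rfl) + g (enc c hc Y hM.1) := by
    rw [← map_add, enc_self c hc Y hM, map_add, f_sing c hc g]
  have h1v : (g (enc c hc Y hM.1)).1 + (g (enc c hc Y hM.1)).1 =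
      ({c} : Set ℕ) + (g (enc c hc Y hM.1)).1 := congrArg Subtype.val h1
  rw [Fm_def c hc g Y hM.1]
  constructor
  · have hcm := mu_mem (g (enc c hc Y hM.1))
    rw [hmuB] at hcm
    exact hcm
  · intro x y hx hy
    have hmem : (c + x) + (c + y) ∈ ({c} : Set ℕ) + (g (enc c hc Y hM.1)).1 := by
      rw [← h1v]
      exact mem_addset.mpr ⟨c + x, hx, c + y, hy, rfl⟩
    obtain ⟨u, hu, v, hv, huv⟩ := mem_addset.mp hmem
    have hu' : u = c := hu
    have hveq : v = c + (x + y) := by omega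
    show c + (x + y) ∈ (g (enc c hc Y hM.1)).1
    rw [← hveq]
    exact hv

include hc in
lemma Fm_add (g : PS H ≃+ PS H) {Y Z : Set ℕ} (hY : Mon Y) (hZ : Mon Z) :
    Fm c hc g (Y + Z) = Fm c hc g Y + Fm c hc g Z := by
  have hYZ : Mon (Y + Z) := hY.addMon hZ
  have key : enc c hc Y hY.1 + enc c hc Z hZ.1 =
      sing c (hc c le_rfl) + enc c hc (Y + Z) hYZ.1 := by
    apply ps_ext
    rw [add_val, add_val, enc_val, enc_val, enc_val, sing_val, img_add_img]
  have h2 := congrArg g key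
  rw [map_add, map_add, f_sing c hc g] at h2
  have h2v := congrArg Subtype.val h2
  rw [add_val, add_val, sing_val, Fm_img c hc g hY, Fm_img c hc g hZ,
    Fm_img c hc g hYZ, img_add_img] at h2v
  have h3 := set_cancel_sing h2v
  exact (img_inj c h3).symm

include hc in
lemma Fm_inv (g : PS H ≃+ PS H) {Y : Set ℕ} (hM : Mon Y) :
    Fm c hc g.symm (Fm c hc g Y) = Y := by
  have hM2 : Mon (Fm c hc g Y) := Fm_mon c hc g hM
  have h1 := Fm_img c hc g hM
  have h3 : enc c hc (Fm c hc g Y) hM2.1 = g (enc c hc Y hM.1) :=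
    ps_ext (by rw [enc_val, ← h1])
  have h2 := Fm_img c hc g.symm hM2
  rw [h3, g.symm_apply_apply, enc_val] at h2
  exact (img_inj c h2).symm

include hc in
lemma Fm_inv' (g : PS H ≃+ PS H) {Y : Set ℕ} (hM : Mon Y) :
    Fm c hc g (Fm c hc g.symm Y) = Y := by
  have := Fm_inv c hc g.symm hM
  rwa [AddEquiv.symm_symm] at this

include hc in
lemma Fm_subset (g : PS H ≃+ PS H) {Y Z : Set ℕ} (hY : Mon Y) (hZ : Mon Z) (h : Y ⊆ Z) :
    Fm c hc g Y ⊆ Fm c hc g Z := by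
  have hadd := Fm_add c hc g hY hZ
  rw [(hY.sub_iff hZ).mp h] at hadd
  intro x hx
  rw [hadd]
  have : x + 0 ∈ Fm c hc g Y + Fm c hc g Z :=
    mem_addset.mpr ⟨x, hx, 0, (Fm_mon c hc g hZ).1, rfl⟩
  simpa using this

def Cov (Y Z : Set ℕ) : Prop :=
  Z ⊆ Y ∧ Z ≠ Y ∧ ∀ W, Mon W → Z ⊆ W → W ⊆ Y → W = Z ∨ W = Y

def Atom (Y : Set ℕ) (x : ℕ) : Prop :=
  x ∈ Y ∧ x ≠ 0 ∧ ∀ a b, a ∈ Y → b ∈ Y → a ≠ 0 → b ≠ 0 → a + b ≠ x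

omit hc in
lemma atom_mon {Y : Set ℕ} {x : ℕ} (hY : Mon Y) (hx : Atom Y x) : Mon (Y \ {x}) := by
  constructor
  · exact ⟨hY.1, fun h => hx.2.1 (by simpa using h.symm)⟩
  · intro a b ha hb
    refine ⟨hY.2 ha.1 hb.1, ?_⟩
    simp only [Set.mem_singleton_iff]
    by_cases a0 : a = 0
    · subst a0
      simp only [Nat.zero_add]
      exact fun h => hb.2 (by simpa using h)
    · by_cases b0 : b = 0
      · subst b0
        simp only [Nat.add_zero]
        exact fun h => ha.2 (by simpa using h)
      · exact hx.2.2 a b ha.1 hb.1 a0 b0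

omit hc in
lemma atom_cov {Y : Set ℕ} {x : ℕ} (hY : Mon Y) (hx : Atom Y x) : Cov Y (Y \ {x}) := by
  refine ⟨Set.diff_subset, ?_, ?_⟩
  · intro h
    have : x ∈ Y \ {x} := h.symm ▸ hx.1
    simp at this
  · intro W hW h1 h2
    by_cases hxW : x ∈ W
    · right
      apply Set.Subset.antisymm h2
      intro y hy
      by_cases hyx : y = x
      · exact hyx ▸ hxW
      · exact h1 ⟨hy, hyx⟩
    · left
      apply Set.Subset.antisymm _ h1
      intro y hy
      exact ⟨h2 hy, fun h => hxW ((by simpa using h : y = x) ▸ hy)⟩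

omit hc in
lemma cov_atom {Y Z : Set ℕ} (hY : Mon Y) (hZ : Mon Z) (h : Cov Y Z) :
    ∃ x, Atom Y x ∧ Z = Y \ {x} := by
  have hne : (Y \ Z).Nonempty := by
    by_contra hemp
    rw [Set.not_nonempty_iff_eq_empty, Set.diff_eq_empty] at hemp
    exact h.2.1 (Set.Subset.antisymm h.1 hemp)
  obtain ⟨x, hxm, hxmin⟩ : ∃ x, x ∈ Y \ Z ∧ ∀ a ∈ Y \ Z, x ≤ a :=
    ⟨sInf (Y \ Z), Nat.sInf_mem hne, fun a ha => Nat.sInf_le ha⟩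
  have hxatom : Atom Y x := by
    refine ⟨hxm.1, ?_, ?_⟩
    · intro h0
      exact hxm.2 (h0 ▸ hZ.1)
    · intro a b ha hb a0 b0 hab
      have hal : a < x := by omega
      have hbl : b < x := by omega
      have haZ : a ∈ Z := by
        by_contra haZ
        have := hxmin a ⟨ha, haZ⟩
        omega
      have hbZ : b ∈ Z := by
        by_contra hbZ
        have := hxmin b ⟨hb, hbZ⟩
        omega
      exact hxm.2 (hab ▸ hZ.2 haZ hbZ)
  refine ⟨x, hxatom, ?_⟩
  have hmon := atom_mon hY hxatom
  have hsub1 : Z ⊆ Y \ {x} := fun y hy => ⟨h.1 hy, fun he => hxm.2 ((by simpa using he : y = x) ▸ hy)⟩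
  rcases h.2.2 (Y \ {x}) hmon hsub1 Set.diff_subset with he | he
  · exact he.symm
  · exfalso
    have : x ∈ Y \ {x} := he.symm ▸ hxm.1
    simp at this

include hc in
lemma Fm_cov (g : PS H ≃+ PS H) {Y Z : Set ℕ} (hY : Mon Y) (hZ : Mon Z) (h : Cov Y Z) :
    Cov (Fm c hc g Y) (Fm c hc g Z) := by
  refine ⟨Fm_subset c hc g hZ hY h.1, ?_, ?_⟩
  · intro he
    have h2 := congrArg (Fm c hc g.symm) he
    rw [Fm_inv c hc g hZ, Fm_inv c hc g hY] at h2
    exact h.2.1 h2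
  · intro W hW h1 h2
    have hW' : Mon (Fm c hc g.symm W) := Fm_mon c hc g.symm hW
    have e1 : Z ⊆ Fm c hc g.symm W := by
      have := Fm_subset c hc g.symm (Fm_mon c hc g hZ) hW h1
      rwa [Fm_inv c hc g hZ] at this
    have e2 : Fm c hc g.symm W ⊆ Y := by
      have := Fm_subset c hc g.symm hW (Fm_mon c hc g hY) h2
      rwa [Fm_inv c hc g hY] at this
    rcases h.2.2 _ hW' e1 e2 with he | he
    · left
      have := congrArg (Fm c hc g) he
      rwa [Fm_inv' c hc g hW] at this
    · right
      have := congrArg (Fm c hc g) he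
      rwa [Fm_inv' c hc g hW] at this


/-! ### The chain of monoids MM w = {0} ∪ [w, ∞) -/

def MM (w : ℕ) : Set ℕ := {0} ∪ Set.Ici w

omit hc in
lemma mem_MM {w n : ℕ} : n ∈ MM w ↔ n = 0 ∨ w ≤ n := by
  simp [MM]

omit hc in
lemma MM_mon (w : ℕ) : Mon (MM w) := by
  constructor
  · rw [mem_MM]; left; rfl
  · intro x y hx hy
    rw [mem_MM] at *
    omega

omit hc in
lemma MM_succ (w : ℕ) (hw : 1 ≤ w) : MM w \ {w} = MM (w+1) := by
  ext n
  simp only [Set.mem_diff, mem_MM, Set.mem_singleton_iff]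
  omega

omit hc in
lemma atom_MM {w x : ℕ} (hw : 1 ≤ w) : Atom (MM w) x ↔ (w ≤ x ∧ x ≤ 2*w - 1) := by
  constructor
  · rintro ⟨hx1, hx2, hx3⟩
    rw [mem_MM] at hx1
    have hxw : w ≤ x := by omega
    refine ⟨hxw, ?_⟩
    by_contra hgt
    exact hx3 w (x - w) (by rw [mem_MM]; omega) (by rw [mem_MM]; omega)
      (by omega) (by omega) (by omega)
  · rintro ⟨h1, h2⟩
    refine ⟨by rw [mem_MM]; omega, by omega, ?_⟩
    intro a b ha hb a0 b0
    rw [mem_MM] at ha hb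
    omega

omit hc in
lemma atom_MMx {w x y : ℕ} (hx1 : w + 1 ≤ x) (hx2 : x ≤ 2*w - 1)
    (hy : Atom (MM w \ {x}) y) : (w ≤ y ∧ y ≤ 2*w - 1 ∧ y ≠ x) ∨ y = 2*w+1 := by
  obtain ⟨hy1, hy2, hy3⟩ := hy
  obtain ⟨hy1', hy1x⟩ := hy1
  rw [mem_MM] at hy1'
  have hyx : y ≠ x := by simpa using hy1x
  have hw : 1 ≤ w := by omega
  have hyw : w ≤ y := by omega
  have hmemw : w ∈ MM w \ {x} := ⟨by rw [mem_MM]; omega, by simp; omega⟩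
  rcases (show y ≤ 2*w - 1 ∨ y = 2*w ∨ y = 2*w+1 ∨ 2*w+2 ≤ y by omega) with h | h | h | h
  · left; exact ⟨hyw, h, hyx⟩
  · exfalso
    exact hy3 w w hmemw hmemw (by omega) (by omega) (by omega)
  · right; exact h
  · exfalso
    by_cases hxx : y - w = x
    · refine hy3 (w+1) (y - w - 1) ⟨by rw [mem_MM]; omega, by simp; omega⟩
        ⟨by rw [mem_MM]; omega, by simp; omega⟩ (by omega) (by omega) (by omega)
    · refine hy3 w (y - w) hmemw ⟨by rw [mem_MM]; omega, by simp; omega⟩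
        (by omega) (by omega) (by omega)

omit hc in
lemma atom_MM2 {w a : ℕ} (hw : 1 ≤ w) (h1 : w + 1 ≤ a) (h2 : a ≤ 2*w + 1) :
    Atom (MM (w+1)) a := by
  rw [atom_MM (by omega)]
  omega

omit hc in
lemma MM_one : MM 1 = Set.univ := by
  ext n
  simp [mem_MM]
  omega

include hc in
lemma img_univ : (c + ·) '' (Set.univ : Set ℕ) = Set.Ici c := by
  ext n
  rw [mem_img c]
  simp only [Set.mem_univ, true_and, Set.mem_Ici]
  constructor
  · rintro ⟨y, _, rfl⟩
    exact Nat.le_add_right c y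
  · intro h
    exact ⟨n - c, by omega⟩

include hc in
lemma Fm_univ (g : PS H ≃+ PS H) : Fm c hc g Set.univ = Set.univ := by
  rw [Fm_def c hc g _ (Set.mem_univ 0)]
  have hfix : g (enc c hc Set.univ (Set.mem_univ 0)) = enc c hc Set.univ (Set.mem_univ 0) :=
    f_tail c hc g _ c (by rw [enc_val, img_univ c hc])
  rw [hfix, dec_enc]

include hc in
lemma Fm_MM (g : PS H ≃+ PS H) : ∀ w, 1 ≤ w → Fm c hc g (MM w) = MM w := by
  intro w hw
  induction w, hw using Nat.le_induction with
  | base => rw [MM_one]; exact Fm_univ c hc g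
  | succ w hw ih =>
    have hcov : Cov (MM w) (MM (w+1)) := by
      have := atom_cov (MM_mon w) ((atom_MM hw).mpr ⟨le_rfl, by omega⟩)
      rwa [MM_succ w hw] at this
    have hcov2 : Cov (MM w) (Fm c hc g (MM (w+1))) := by
      have := Fm_cov c hc g (MM_mon w) (MM_mon (w+1)) hcov
      rwa [ih] at this
    obtain ⟨x, hxa, hxe⟩ := cov_atom (MM_mon w) (Fm_mon c hc g (MM_mon (w+1))) hcov2
    obtain ⟨hx1, hx2⟩ := (atom_MM hw).mp hxa
    by_cases hxw : x = w
    · rw [hxe, hxw, MM_succ w hw]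
    · exfalso
      have hx1' : w + 1 ≤ x := by omega
      have hw2 : 2 ≤ w := by omega
      have hβ : ∀ a : ℕ, Atom (MM (w+1)) a →
          ∃ b, Atom (MM w \ {x}) b ∧ Fm c hc g (MM (w+1) \ {a}) = (MM w \ {x}) \ {b} := by
        intro a ha
        have hma : Mon (MM (w+1) \ {a}) := atom_mon (MM_mon _) ha
        have hcv : Cov (Fm c hc g (MM (w+1))) (Fm c hc g (MM (w+1) \ {a})) :=
          Fm_cov c hc g (MM_mon _) hma (atom_cov (MM_mon _) ha)
        rw [hxe] at hcv
        exact cov_atom (atom_mon (MM_mon w) hxa) (Fm_mon c hc g hma) hcv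
      classical
      set φ : ℕ → ℕ := fun a => if h : Atom (MM (w+1)) a then (hβ a h).choose else 0 with hφ
      have hφ1 : ∀ a (h : Atom (MM (w+1)) a), Atom (MM w \ {x}) (φ a) ∧
          Fm c hc g (MM (w+1) \ {a}) = (MM w \ {x}) \ {φ a} := by
        intro a h
        rw [hφ]
        simp only [dif_pos h]
        exact (hβ a h).choose_spec
      have hS : ∀ a ∈ Finset.Icc (w+1) (2*w+1), Atom (MM (w+1)) a := by
        intro a haa
        rw [Finset.mem_Icc] at haa
        exact atom_MM2 hw haa.1 haa.2
      have hmap : ∀ a ∈ Finset.Icc (w+1) (2*w+1),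
          φ a ∈ insert (2*w+1) ((Finset.Icc w (2*w-1)).erase x) := by
        intro a haa
        obtain ⟨hb1, _⟩ := hφ1 a (hS a haa)
        rcases atom_MMx hx1' hx2 hb1 with ⟨h1, h2, h3⟩ | h1
        · apply Finset.mem_insert_of_mem
          rw [Finset.mem_erase, Finset.mem_Icc]
          exact ⟨h3, h1, h2⟩
        · rw [h1]
          exact Finset.mem_insert_self _ _
      have hinj : Set.InjOn φ (Finset.Icc (w+1) (2*w+1) : Finset ℕ) := by
        intro a ha a' ha' he
        rw [Finset.mem_coe] at ha ha'
        obtain ⟨_, hfa⟩ := hφ1 a (hS a ha)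
        obtain ⟨_, hfa'⟩ := hφ1 a' (hS a' ha')
        by_contra hne
        have hFeq : Fm c hc g (MM (w+1) \ {a}) = Fm c hc g (MM (w+1) \ {a'}) := by
          rw [hfa, hfa', he]
        have h9 := congrArg (Fm c hc g.symm) hFeq
        rw [Fm_inv c hc g (atom_mon (MM_mon _) (hS a ha)),
            Fm_inv c hc g (atom_mon (MM_mon _) (hS a' ha'))] at h9
        have haM : a ∈ MM (w+1) \ {a'} := ⟨(hS a ha).1, by simpa using hne⟩
        rw [← h9] at haM
        simp at haM
      have hcard := Finset.card_le_card_of_injOn φ hmap hinj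
      rw [Nat.card_Icc] at hcard
      have hxmem : x ∈ Finset.Icc w (2*w-1) := by rw [Finset.mem_Icc]; omega
      have hc1 : (insert (2*w+1) ((Finset.Icc w (2*w-1)).erase x)).card ≤
          ((Finset.Icc w (2*w-1)).erase x).card + 1 := Finset.card_insert_le _ _
      rw [Finset.card_erase_of_mem hxmem, Nat.card_Icc] at hc1
      omega

def gad (v : ℕ) : PS H := enc c hc (MM v) (by rw [mem_MM]; left; rfl)

lemma gad_val (v : ℕ) : (gad c hc v).1 = {c} ∪ Set.Ici (c + v) := by
  rw [gad, enc_val]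
  ext n
  rw [mem_img c]
  simp only [Set.mem_union, Set.mem_singleton_iff, Set.mem_Ici]
  constructor
  · rintro ⟨y, hy, rfl⟩
    rw [mem_MM] at hy
    omega
  · intro h
    rcases h with h | h
    · exact ⟨0, by rw [mem_MM]; left; rfl, by omega⟩
    · exact ⟨n - c, by rw [mem_MM]; right; omega, by omega⟩

lemma mu_gad (v : ℕ) : mu (gad c hc v) = c := mu_enc c hc _ _

include hc in
lemma f_gad (g : PS H ≃+ PS H) (v : ℕ) (hv : 1 ≤ v) : g (gad c hc v) = gad c hc v := by
  have h1 := Fm_img c hc g (MM_mon v)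
  rw [Fm_MM c hc g v hv] at h1
  exact ps_ext (by rw [gad] at *; rw [h1, ← enc_val])

/-! ### Threshold criterion and conclusion -/

include hc in
lemma crit (A : PS H) (v : ℕ) :
    A + gad c hc v = sing c (hc c le_rfl) + A ↔ Set.Ici (mu A + v) ⊆ A.1 := by
  constructor
  · intro h n hn
    have hn' : mu A + v ≤ n := hn
    have hmem : c + n ∈ A.1 + (gad c hc v).1 := by
      rw [gad_val]
      refine mem_addset.mpr ⟨mu A, mu_mem A, c + (n - mu A), ?_, by omega⟩
      right
      simp only [Set.mem_Ici]
      omega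
    rw [← add_val, h, add_val, sing_val] at hmem
    obtain ⟨x, hx, y, hy, hxy⟩ := mem_addset.mp hmem
    have hx' : x = c := hx
    have : y = n := by omega
    exact this ▸ hy
  · intro h
    apply ps_ext
    rw [add_val, add_val, gad_val, sing_val]
    ext n
    constructor
    · intro hn
      obtain ⟨x, hx, y, hy, rfl⟩ := mem_addset.mp hn
      rcases hy with hy | hy
      · have hy' : y = c := hy
        exact mem_addset.mpr ⟨c, rfl, x, hx, by omega⟩
      · have hy' : c + v ≤ y := hy
        have hxA : mu A ≤ x := mu_le hx
        refine mem_addset.mpr ⟨c, rfl, x + y - c, h ?_, by omega⟩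
        simp only [Set.mem_Ici]
        omega
    · intro hn
      obtain ⟨x, hx, y, hy, rfl⟩ := mem_addset.mp hn
      have hx' : x = c := hx
      exact mem_addset.mpr ⟨y, hy, c, Or.inl rfl, by omega⟩

include hc in
lemma thresh_iff (g : PS H ≃+ PS H) (A : PS H) (v : ℕ) (hv : 1 ≤ v) :
    Set.Ici (mu A + v) ⊆ A.1 ↔ Set.Ici (mu A + v) ⊆ (g A).1 := by
  have h2 := crit c hc (g A) v
  rw [mu_fix c hc g] at h2
  rw [← crit c hc A v, ← h2]
  constructor
  · intro h
    have := congrArg g h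
    rwa [map_add, map_add, f_gad c hc g v hv, f_sing c hc g] at this
  · intro h
    have := congrArg g.symm h
    rwa [map_add, map_add, f_gad c hc g.symm v hv, f_sing c hc g.symm,
      g.symm_apply_apply] at this

include hc in
lemma low_agree (g : PS H ≃+ PS H) (A : PS H) (v : ℕ) (hv : 1 ≤ v)
    (hfix : g (A + gad c hc v) = A + gad c hc v) :
    ∀ n, n < mu A + v → (n ∈ (g A).1 ↔ n ∈ A.1) := by
  have hval : (g A).1 + ({c} ∪ Set.Ici (c + v)) = A.1 + ({c} ∪ Set.Ici (c + v)) := by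
    have h1 := hfix
    rw [map_add, f_gad c hc g v hv] at h1
    have := congrArg Subtype.val h1
    rw [add_val, add_val, gad_val] at this
    exact this
  have haux : ∀ (X X' : Set ℕ), (∀ x ∈ X', mu A ≤ x) →
      X + ({c} ∪ Set.Ici (c + v)) = X' + ({c} ∪ Set.Ici (c + v)) →
      ∀ n, n < mu A + v → n ∈ X → n ∈ X' := by
    intro X X' hmin' heq n hn hmem
    have h1 : c + n ∈ X' + ({c} ∪ Set.Ici (c + v)) := by
      rw [← heq]
      exact mem_addset.mpr ⟨n, hmem, c, Or.inl rfl, by omega⟩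
    obtain ⟨x, hx, y, hy, hxy⟩ := mem_addset.mp h1
    rcases hy with hy | hy
    · have hy' : y = c := hy
      have : x = n := by omega
      exact this ▸ hx
    · exfalso
      have hy' : c + v ≤ y := hy
      have := hmin' x hx
      omega
  intro n hn
  constructor
  · exact haux (g A).1 A.1 (fun x hx => mu_le hx) hval n hn
  · refine haux A.1 (g A).1 (fun x hx => ?_) hval.symm n hn
    have := mu_le hx
    rwa [mu_fix c hc g] at this

include hc in
lemma gad_big (A : PS H) (v : ℕ) :
    Set.Ici (mu (A + gad c hc v) + v) ⊆ (A + gad c hc v).1 := by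
  intro n hn
  rw [mu_add, mu_gad] at hn
  have hn' : mu A + c + v ≤ n := hn
  rw [add_val, gad_val]
  refine mem_addset.mpr ⟨mu A, mu_mem A, n - mu A, ?_, by omega⟩
  right
  simp only [Set.mem_Ici]
  omega

include hc in
lemma big_fixed (g : PS H ≃+ PS H) :
    ∀ v, 1 ≤ v → ∀ A : PS H, Set.Ici (mu A + v) ⊆ A.1 → g A = A := by
  intro v hv
  induction v, hv using Nat.le_induction with
  | base =>
    intro A hA
    apply f_tail c hc g A (mu A)
    apply Set.Subset.antisymm
    · intro n hn
      exact mu_le hn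
    · intro n hn
      have hn' : mu A ≤ n := hn
      rcases eq_or_lt_of_le hn' with h | h
      · exact h ▸ mu_mem A
      · exact hA (by simp only [Set.mem_Ici]; omega)
  | succ v hv ih =>
    intro A hA
    by_cases hcase : mu A + v ∈ A.1
    · apply ih
      intro n hn
      have hn' : mu A + v ≤ n := hn
      rcases eq_or_lt_of_le hn' with h | h
      · exact h ▸ hcase
      · exact hA (by simp only [Set.mem_Ici]; omega)
    · have hfix := ih (A + gad c hc v) (gad_big c hc A v)
      have hlow := low_agree c hc g A v (by omega) hfix
      have hhigh : Set.Ici (mu A + (v+1)) ⊆ (g A).1 :=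
        (thresh_iff c hc g A (v+1) (by omega)).mp hA
      have hnb : mu A + v ∉ (g A).1 := by
        intro hmem
        have hIci : Set.Ici (mu A + v) ⊆ (g A).1 := by
          intro n hn
          have hn' : mu A + v ≤ n := hn
          rcases eq_or_lt_of_le hn' with h | h
          · exact h ▸ hmem
          · exact hhigh (by simp only [Set.mem_Ici]; omega)
        have := (thresh_iff c hc g A v (by omega)).mpr hIci
        exact hcase (this (by simp only [Set.mem_Ici]; omega))
      apply ps_ext
      ext n
      rcases lt_trichotomy n (mu A + v) with h | h | h
      · exact hlow n h
      · subst h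
        exact iff_of_false hnb hcase
      · exact iff_of_true (hhigh (by simp only [Set.mem_Ici]; omega))
          (hA (by simp only [Set.mem_Ici]; omega))

include hc in
lemma main (g : PS H ≃+ PS H) (A : PS H) : g A = A := by
  apply ps_ext
  ext n
  by_cases hn : n < mu A
  · refine iff_of_false (fun h => ?_) (fun h => ?_)
    · have := mu_le h
      rw [mu_fix c hc g] at this
      omega
    · have := mu_le h
      omega
  · push_neg at hn
    have hv1 : 1 ≤ n - mu A + 1 := by omega
    have hfix := big_fixed c hc g (n - mu A + 1) hv1 (A + gad c hc (n - mu A + 1))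
      (gad_big c hc A (n - mu A + 1))
    exact low_agree c hc g A (n - mu A + 1) hv1 hfix n (by omega)

end C
end S16

/-- The automorphism group of the large power semigroup of a numerical
semigroup is trivial. -/
theorem stmt16 (H : NumSgp) (f : PS H ≃+ PS H) : ∀ X : PS H, f X = X := by
  obtain ⟨b, hb⟩ := H.cofinite.bddAbove
  have hc : ∀ n, b + 1 ≤ n → n ∈ H.carrier := by
    intro n hn
    by_contra hmem
    have := hb (Set.mem_compl hmem)
    omega
  intro X
  exact S16.main (b + 1) hc f X
end
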